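/- arXiv:2301.05473 — 6 statements merged into one kernel-verified Lean document; each statement's English description precedes it below -/
import Mathlib

section
/- Let ρ(t) = ∫₀¹ n(t,x) dx be the total tumour mass of a nonnegative solution of the tumour equation ∂n/∂t(t,x) = [r(x) − d(x)ρ(t) − μ(x)φ(t)] n(t,x) on t > 0, x ∈ [0,1], where φ(t) ≥ 0 for all t. Then limsup_{t→∞} ρ(t) ≤ ρ⋆ := max_{x∈[0,1]} r(x)/d(x). -/
open Real Set Filter MeasureTheory Topology

/-! Along each trait `x` the density solves a linear ODE with rate `r - d ρ - μ φ ≤ r`, so it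
grows at most exponentially; this dominates `n` locally in time and makes `ρ` continuous. While
`ρ > ρ⋆ + ε`, the rate is at most `d (ρ⋆ - ρ) ≤ -ε min d`, so every `n(·, x)`, and with it `ρ`,
decays exponentially. Hence `ρ` drops below `ρ⋆ + ε` at some time, and by continuity it can never
climb back above. -/

theorem le_exp_mul_of_hasDerivAt_mul {f g : ℝ → ℝ} {a b k : ℝ} (hab : a ≤ b)
    (hf : ContinuousOn f (Icc a b)) (hf' : ∀ u ∈ Ioo a b, HasDerivAt f (g u * f u) u)
    (hf₀ : ∀ u ∈ Ioo a b, 0 ≤ f u) (hg : ∀ u ∈ Ioo a b, g u ≤ k) :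
    f b ≤ exp (k * (b - a)) * f a := by
  have hanti : AntitoneOn (fun u => exp (-(k * u)) * f u) (Icc a b) := by
    refine antitoneOn_of_hasDerivWithinAt_nonpos (convex_Icc a b)
      (f' := fun u => exp (-(k * u)) * ((g u - k) * f u)) ?_ ?_ ?_
    · exact (continuous_exp.comp (continuous_const_mul k).neg).continuousOn.mul hf
    · intro u hu
      rw [interior_Icc] at hu
      have hexp : HasDerivAt (fun v => exp (-(k * v))) (exp (-(k * u)) * -k) u := by
        simpa using ((hasDerivAt_id' u).const_mul k).neg.exp
      exact (hexp.fun_mul (hf' u hu)).hasDerivWithinAt.congr_deriv (by ring)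
    · intro u hu
      rw [interior_Icc] at hu
      exact mul_nonpos_of_nonneg_of_nonpos (exp_pos _).le
        (mul_nonpos_of_nonpos_of_nonneg (sub_nonpos.2 (hg u hu)) (hf₀ u hu))
  have hend := hanti ⟨le_rfl, hab⟩ ⟨hab, le_rfl⟩ hab
  calc f b = exp (k * b) * (exp (-(k * b)) * f b) := by
        rw [← mul_assoc, ← exp_add, add_neg_cancel, exp_zero, one_mul]
    _ ≤ exp (k * b) * (exp (-(k * a)) * f a) := by gcongr
    _ = exp (k * (b - a)) * f a := by rw [← mul_assoc, ← exp_add]; ring_nf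

theorem eventually_le_of_decay_above {f : ℝ → ℝ} {a L κ : ℝ} (hL : 0 < L) (hκ : 0 < κ)
    (hf : ContinuousOn f (Ici a))
    (hdecay : ∀ t₁ t₂, a ≤ t₁ → t₁ ≤ t₂ → (∀ u ∈ Ioo t₁ t₂, L < f u) →
      f t₂ ≤ exp (-κ * (t₂ - t₁)) * f t₁) :
    ∀ᶠ t in atTop, f t ≤ L := by
  have hstay : ∀ t₁ t₂, a ≤ t₁ → t₁ ≤ t₂ → (∀ u ∈ Ioo t₁ t₂, L < f u) → f t₁ ≤ L →
      f t₂ ≤ L := by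
    intro t₁ t₂ ht₁ ht hgt hft₁
    have he : exp (-κ * (t₂ - t₁)) ≤ 1 := exp_le_one_iff.2 (by nlinarith)
    nlinarith [hdecay t₁ t₂ ht₁ ht hgt, exp_pos (-κ * (t₂ - t₁))]
  obtain ⟨t₁, ht₁, hft₁⟩ : ∃ t₁, a ≤ t₁ ∧ f t₁ ≤ L := by
    by_contra! habove
    have hlim : Tendsto (fun t => exp (-κ * (t - a)) * f a) atTop (𝓝 0) := by
      have hlin : Tendsto (fun t => κ * (t - a)) atTop atTop :=
        (tendsto_atTop_add_const_right _ (-a) tendsto_id).const_mul_atTop hκ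
      simpa [neg_mul] using (tendsto_exp_neg_atTop_nhds_zero.comp hlin).mul_const (f a)
    obtain ⟨T, hT, hsmall⟩ :=
      ((eventually_ge_atTop a).and (hlim.eventually (gt_mem_nhds hL))).exists
    exact (habove T hT).not_ge ((hdecay a T le_rfl hT fun u hu => habove u hu.1.le).trans
      hsmall.le)
  filter_upwards [eventually_ge_atTop t₁] with t ht
  have hclosed : IsClosed ({u | f u ≤ L} ∩ Icc t₁ t) := by
    rw [inter_comm]
    exact ((hf.mono fun u hu => ht₁.trans hu.1).preimage_isClosed_of_isClosed isClosed_Icc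
      isClosed_Iic)
  refine hclosed.Icc_subset_of_forall_exists_gt hft₁ (fun x hx y hy => ?_) ⟨ht, le_rfl⟩
  by_contra hempty
  have hgt : ∀ u ∈ Ioc x y, L < f u := fun u hu => lt_of_not_ge fun hu' => hempty ⟨u, hu', hu⟩
  exact (hgt y ⟨hy, le_rfl⟩).not_ge (hstay x y (ht₁.trans hx.2.1) hy.le
    (fun u hu => hgt u ⟨hu.1, hu.2.le⟩) hx.1)

section Tumour

variable {n : ℝ → ℝ → ℝ} {r d μ ρ φ : ℝ → ℝ}

theorem tumourMass_nonneg (hnnn : ∀ t ≥ (0:ℝ), ∀ x ∈ Icc (0:ℝ) 1, 0 ≤ n t x)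
    (hρdef : ∀ t, ρ t = ∫ x in (0:ℝ)..1, n t x) {t : ℝ} (ht : 0 ≤ t) : 0 ≤ ρ t := by
  rw [hρdef]
  exact intervalIntegral.integral_nonneg zero_le_one (hnnn t ht)

theorem density_le_exp_mul_of_rate_le (hnnn : ∀ t ≥ (0:ℝ), ∀ x ∈ Icc (0:ℝ) 1, 0 ≤ n t x)
    (hnode : ∀ x ∈ Icc (0:ℝ) 1, ∀ t > (0:ℝ),
      HasDerivAt (fun s => n s x) ((r x - d x * ρ t - μ x * φ t) * n t x) t)
    {x t₁ t₂ k : ℝ} (hx : x ∈ Icc (0:ℝ) 1) (ht₁ : 0 < t₁) (ht : t₁ ≤ t₂)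
    (hk : ∀ u ∈ Ioo t₁ t₂, r x - d x * ρ u - μ x * φ u ≤ k) :
    n t₂ x ≤ exp (k * (t₂ - t₁)) * n t₁ x :=
  le_exp_mul_of_hasDerivAt_mul ht
    (fun u hu => (hnode x hx u (ht₁.trans_le hu.1)).continuousAt.continuousWithinAt)
    (fun u hu => hnode x hx u (ht₁.trans hu.1)) (fun u hu => hnnn u (ht₁.trans hu.1).le x hx) hk

theorem continuousAt_tumourMass (hrc : ContinuousOn r (Icc 0 1))
    (hrpos : ∀ x ∈ Icc (0:ℝ) 1, 0 < r x)
    (hdpos : ∀ x ∈ Icc (0:ℝ) 1, 0 < d x)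
    (hμpos : ∀ x ∈ Icc (0:ℝ) 1, 0 < μ x) (hφnn : ∀ t, 0 ≤ φ t)
    (hnnn : ∀ t ≥ (0:ℝ), ∀ x ∈ Icc (0:ℝ) 1, 0 ≤ n t x)
    (hncont : ∀ t ≥ (0:ℝ), ContinuousOn (n t) (Icc 0 1))
    (hnode : ∀ x ∈ Icc (0:ℝ) 1, ∀ t > (0:ℝ),
      HasDerivAt (fun s => n s x) ((r x - d x * ρ t - μ x * φ t) * n t x) t)
    (hρdef : ∀ t, ρ t = ∫ x in (0:ℝ)..1, n t x) {t : ℝ} (ht : 0 < t) : ContinuousAt ρ t := by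
  have ht₀ : 0 < t / 2 := half_pos ht
  have hgrowth : ∀ x ∈ Icc (0:ℝ) 1, ∀ s ∈ Ioo (t / 2) (t + 1),
      n s x ≤ exp (r x * (t + 1 - t / 2)) * n (t / 2) x := by
    intro x hx s hs
    have hrate : ∀ u ∈ Ioo (t / 2) s, r x - d x * ρ u - μ x * φ u ≤ r x := fun u hu => by
      nlinarith [mul_nonneg (hdpos x hx).le (tumourMass_nonneg hnnn hρdef (ht₀.trans hu.1).le),
        mul_nonneg (hμpos x hx).le (hφnn u)]
    calc n s x ≤ exp (r x * (s - t / 2)) * n (t / 2) x :=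
          density_le_exp_mul_of_rate_le hnnn hnode hx ht₀ hs.1.le hrate
      _ ≤ exp (r x * (t + 1 - t / 2)) * n (t / 2) x := by
          gcongr
          · exact hnnn _ ht₀.le x hx
          · exact (hrpos x hx).le
          · exact hs.2.le
  have hIoc : uIoc (0:ℝ) 1 ⊆ Icc 0 1 := by
    rw [uIoc_of_le zero_le_one]; exact Ioc_subset_Icc_self
  rw [show ρ = fun s => ∫ x in (0:ℝ)..1, n s x from funext hρdef]
  refine intervalIntegral.continuousAt_of_dominated_interval
    (bound := fun x => exp (r x * (t + 1 - t / 2)) * n (t / 2) x) ?_ ?_ ?_ ?_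
  · filter_upwards [Ioi_mem_nhds ht] with s hs
    exact ((hncont s hs.le).mono hIoc).aestronglyMeasurable measurableSet_uIoc
  · filter_upwards [Ioo_mem_nhds (half_lt_self ht) (lt_add_one t)] with s hs
    refine ae_of_all _ fun x hx => ?_
    rw [Real.norm_of_nonneg (hnnn s (ht₀.trans hs.1).le x (hIoc hx))]
    exact hgrowth x (hIoc hx) s hs
  · refine ContinuousOn.intervalIntegrable ?_
    rw [uIcc_of_le zero_le_one]
    exact ((hrc.mul continuousOn_const).rexp).mul (hncont _ ht₀.le)
  · exact ae_of_all _ fun x hx => (hnode x (hIoc hx) t ht).continuousAt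

theorem tumourMass_le_exp_mul_of_gt (hdpos : ∀ x ∈ Icc (0:ℝ) 1, 0 < d x)
    (hμpos : ∀ x ∈ Icc (0:ℝ) 1, 0 < μ x) (hφnn : ∀ t, 0 ≤ φ t)
    (hnnn : ∀ t ≥ (0:ℝ), ∀ x ∈ Icc (0:ℝ) 1, 0 ≤ n t x)
    (hncont : ∀ t ≥ (0:ℝ), ContinuousOn (n t) (Icc 0 1))
    (hnode : ∀ x ∈ Icc (0:ℝ) 1, ∀ t > (0:ℝ),
      HasDerivAt (fun s => n s x) ((r x - d x * ρ t - μ x * φ t) * n t x) t)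
    (hρdef : ∀ t, ρ t = ∫ x in (0:ℝ)..1, n t x) {ρstar dmin ε t₁ t₂ : ℝ}
    (hρstar : ∀ x ∈ Icc (0:ℝ) 1, r x / d x ≤ ρstar) (hdmin : ∀ x ∈ Icc (0:ℝ) 1, dmin ≤ d x)
    (hε : 0 ≤ ε) (ht₁ : 0 < t₁) (ht : t₁ ≤ t₂) (hρ : ∀ u ∈ Ioo t₁ t₂, ρstar + ε < ρ u) :
    ρ t₂ ≤ exp (-(dmin * ε) * (t₂ - t₁)) * ρ t₁ := by
  have hpointwise : ∀ x ∈ Icc (0:ℝ) 1, n t₂ x ≤ exp (-(dmin * ε) * (t₂ - t₁)) * n t₁ x := by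
    intro x hx
    refine density_le_exp_mul_of_rate_le hnnn hnode hx ht₁ ht fun u hu => ?_
    have hr : r x ≤ ρstar * d x := (div_le_iff₀ (hdpos x hx)).1 (hρstar x hx)
    nlinarith [mul_le_mul_of_nonneg_left (hρ u hu).le (hdpos x hx).le,
      mul_le_mul_of_nonneg_right (hdmin x hx) hε, mul_nonneg (hμpos x hx).le (hφnn u)]
  have hcont : ∀ s ≥ (0:ℝ), ContinuousOn (n s) (uIcc 0 1) := fun s hs => by
    rw [uIcc_of_le zero_le_one]; exact hncont s hs
  rw [hρdef, hρdef, ← intervalIntegral.integral_const_mul]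
  exact intervalIntegral.integral_mono_on zero_le_one
    (hcont _ (ht₁.le.trans ht)).intervalIntegrable
    (continuousOn_const.mul (hcont _ ht₁.le)).intervalIntegrable hpointwise

end Tumour

theorem tumour_mass_limsup_bound_general
    (n : ℝ → ℝ → ℝ) (r d μ : ℝ → ℝ) (ρ φ : ℝ → ℝ) (ρstar : ℝ)
    (hrc : ContinuousOn r (Set.Icc 0 1)) (hdc : ContinuousOn d (Set.Icc 0 1))
    (hrpos : ∀ x ∈ Set.Icc (0:ℝ) 1, 0 < r x)
    (hdpos : ∀ x ∈ Set.Icc (0:ℝ) 1, 0 < d x)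
    (hμpos : ∀ x ∈ Set.Icc (0:ℝ) 1, 0 < μ x)
    (hφnn : ∀ t, 0 ≤ φ t)
    (hnnn : ∀ t ≥ (0:ℝ), ∀ x ∈ Set.Icc (0:ℝ) 1, 0 ≤ n t x)
    (hncont : ∀ t ≥ (0:ℝ), ContinuousOn (n t) (Set.Icc 0 1))
    (hnode : ∀ x ∈ Set.Icc (0:ℝ) 1, ∀ t > (0:ℝ),
      HasDerivAt (fun s => n s x) ((r x - d x * ρ t - μ x * φ t) * n t x) t)
    (hρdef : ∀ t, ρ t = ∫ x in (0:ℝ)..1, n t x)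
    (hρstar : IsGreatest ((fun x => r x / d x) '' Set.Icc (0:ℝ) 1) ρstar) :
    ∀ ε > 0, ∀ᶠ t in Filter.atTop, ρ t ≤ ρstar + ε := by
  intro ε hε
  obtain ⟨xmin, hxmin, hdmin⟩ := isCompact_Icc.exists_isMinOn (nonempty_Icc.2 zero_le_one) hdc
  have hρstar_pos : 0 < ρstar := by
    obtain ⟨x, hx, rfl⟩ := hρstar.1
    exact div_pos (hrpos x hx) (hdpos x hx)
  refine eventually_le_of_decay_above (a := 1) (by positivity)
    (mul_pos (hdpos xmin hxmin) hε) ?_ fun t₁ t₂ ht₁ ht hρ => ?_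
  · exact fun t ht => (continuousAt_tumourMass hrc hrpos hdpos hμpos hφnn hnnn hncont hnode hρdef
      (zero_lt_one.trans_le ht)).continuousWithinAt
  · exact tumourMass_le_exp_mul_of_gt hdpos hμpos hφnn hnnn hncont hnode hρdef
      (fun x hx => hρstar.2 ⟨x, hx, rfl⟩) (fun x hx => hdmin hx) hε.le
      (zero_lt_one.trans_le ht₁) ht hρ

/-- Bound on the limsup of the total tumour mass: limsup ρ(t) ≤ ρ⋆ = max r/d. -/
theorem tumour_mass_limsup_bound
    (n : ℝ → ℝ → ℝ) (r d μ : ℝ → ℝ) (ρ φ : ℝ → ℝ) (ρstar : ℝ)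
    (hrc : ContinuousOn r (Set.Icc 0 1)) (hdc : ContinuousOn d (Set.Icc 0 1))
    (hμc : ContinuousOn μ (Set.Icc 0 1))
    (hrpos : ∀ x ∈ Set.Icc (0:ℝ) 1, 0 < r x)
    (hdpos : ∀ x ∈ Set.Icc (0:ℝ) 1, 0 < d x)
    (hμpos : ∀ x ∈ Set.Icc (0:ℝ) 1, 0 < μ x)
    (hφc : Continuous φ) (hφnn : ∀ t, 0 ≤ φ t)
    (hnnn : ∀ t ≥ (0:ℝ), ∀ x ∈ Set.Icc (0:ℝ) 1, 0 ≤ n t x)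
    (hncont : ∀ t ≥ (0:ℝ), ContinuousOn (n t) (Set.Icc 0 1))
    (hnode : ∀ x ∈ Set.Icc (0:ℝ) 1, ∀ t > (0:ℝ),
      HasDerivAt (fun s => n s x) ((r x - d x * ρ t - μ x * φ t) * n t x) t)
    (hρdef : ∀ t, ρ t = ∫ x in (0:ℝ)..1, n t x)
    (hρstar : IsGreatest ((fun x => r x / d x) '' Set.Icc (0:ℝ) 1) ρstar) :
    ∀ ε > 0, ∀ᶠ t in Filter.atTop, ρ t ≤ ρstar + ε :=
  tumour_mass_limsup_bound_general n r d μ ρ φ ρstar hrc hdc hrpos hdpos hμpos hφnn hnnn hncont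
    hnode hρdef hρstar
end

section
/- Under the integro-differential system (ide), for every y ∈ [0,1], limsup_{t→∞} χ(t,y) ≤ ω^M(y) ρ⋆, where χ(t,y) = ∫₀¹ ω(x,y) n(t,x) dx, ω^M(y) := max_{x∈[0,1]} ω(x,y), and ρ⋆ = max_{x∈[0,1]} r(x)/d(x). -/
/-!
Since `r ≤ ρ⋆ d`, the per-capita growth rate of every trait is at most `d(x) (ρ⋆ - ρ(t))`. Hence the
total mass `ρ` decays exponentially, at rate at least `ε · min d`, as long as it stays above
`ρ⋆ + ε`, and it never grows faster than exponentially. Looking at the last time `ρ` was below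
`ρ⋆ + ε`, these two facts force `ρ ≤ ρ⋆ + ε` for all large times, and `χ(t, y) ≤ ω^M(y) ρ(t)`.
-/

open Set Filter Topology Real

theorem le_mul_exp_of_hasDerivAt_le {f f' : ℝ → ℝ} {K a b : ℝ} (hab : a ≤ b)
    (hf : ∀ s ∈ Icc a b, HasDerivAt f (f' s) s) (hbound : ∀ s ∈ Icc a b, f' s ≤ K * f s) :
    f b ≤ f a * exp (K * (b - a)) := by
  have h := le_gronwallBound_of_liminf_deriv_right_le (f' := f') (ε := 0)
    (fun s hs => (hf s hs).continuousAt.continuousWithinAt)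
    (fun s hs _ hr => (hf s (Ico_subset_Icc_self hs)).hasDerivWithinAt.liminf_right_slope_le hr)
    le_rfl (fun s hs => by simpa using hbound s (Ico_subset_Icc_self hs)) b ⟨hab, le_rfl⟩
  rwa [gronwallBound_ε0] at h

theorem le_of_forall_pos_le_mul_exp {x L G : ℝ} (h : ∀ η > 0, x ≤ L * exp (G * η)) : x ≤ L := by
  have hlim : Tendsto (fun η => L * exp (G * η)) (𝓝[>] 0) (𝓝 L) := by
    have : Continuous fun η => L * exp (G * η) := by fun_prop
    simpa using (this.tendsto 0).mono_left nhdsWithin_le_nhds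
  exact ge_of_tendsto hlim (eventually_mem_nhdsWithin.mono h)

theorem eventually_le_of_growth_of_decay {ρ : ℝ → ℝ} {a G c L : ℝ} (hG : 0 ≤ G) (hc : 0 < c)
    (hL : 0 < L) (hρ : ∀ t ≥ a, 0 ≤ ρ t)
    (hgrowth : ∀ s u, a ≤ s → s ≤ u → ρ u ≤ ρ s * exp (G * (u - s)))
    (hdecay : ∀ s u, a ≤ s → s ≤ u → (∀ v ∈ Icc s u, L ≤ ρ v) →
      ρ u ≤ ρ s * exp (-c * (u - s))) :
    ∀ᶠ t in atTop, ρ t ≤ L := by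
  have hinitial : Tendsto (fun t => ρ a * exp (-c * (t - a))) atTop (𝓝 0) := by
    have hexp := tendsto_exp_atBot.comp
      ((tendsto_atTop_add_const_right atTop (-a) tendsto_id).const_mul_atTop_of_neg (neg_neg_of_pos hc))
    simpa [sub_eq_add_neg] using hexp.const_mul (ρ a)
  filter_upwards [hinitial.eventually (gt_mem_nhds hL), eventually_ge_atTop a] with t hsmall hat
  by_contra! hLt
  set S := {s ∈ Icc a t | ρ s < L}
  rcases S.eq_empty_or_nonempty with hS | hS
  · have hbig : ∀ v ∈ Icc a t, L ≤ ρ v := fun v hv =>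
      not_lt.1 fun h => (hS.subset ⟨hv, h⟩ : v ∈ (∅ : Set ℝ))
    linarith [hdecay a t le_rfl hat hbig]
  have hbdd : BddAbove S := ⟨t, fun s hs => hs.1.2⟩
  set t₀ := sSup S
  -- From `s` just before `t₀` to `u` just after it, `ρ` grows by a factor of at most `exp (G η)`;
  -- on `[u, t]` it stays above `L`, so it decreases.
  have key : ∀ η > 0, ρ t ≤ L * exp (G * η) := by
    intro η hη
    obtain ⟨s, ⟨⟨has, hst⟩, hs⟩, hs₀⟩ := exists_lt_of_lt_csSup hS (sub_lt_self t₀ (half_pos hη))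
    have hst₀ : s ≤ t₀ := le_csSup hbdd ⟨⟨has, hst⟩, hs⟩
    set u := min (t₀ + η / 2) t
    have hsu : s ≤ u := le_min (by linarith) hst
    have hbig : ∀ v ∈ Icc u t, L ≤ ρ v := by
      intro v ⟨huv, hvt⟩
      by_contra! hv
      have hvt₀ : v ≤ t₀ := le_csSup hbdd ⟨⟨by linarith [min_le_right (t₀ + η / 2) t], hvt⟩, hv⟩
      rcases min_le_iff.1 huv with h | h
      · linarith
      · rw [le_antisymm hvt h] at hv
        linarith
    calc ρ t ≤ ρ u * exp (-c * (t - u)) := hdecay u t (has.trans hsu) (min_le_right _ _) hbig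
      _ ≤ ρ u := mul_le_of_le_one_right (hρ u (has.trans hsu))
          (exp_le_one_iff.2 (by nlinarith [min_le_right (t₀ + η / 2) t]))
      _ ≤ ρ s * exp (G * (u - s)) := hgrowth s u has hsu
      _ ≤ L * exp (G * η) := by
          gcongr
          linarith [min_le_left (t₀ + η / 2) t]
  exact hLt.not_ge (le_of_forall_pos_le_mul_exp key)

theorem integral_le_integral_mul_exp_of_rate_le {n g : ℝ → ℝ → ℝ} {a b s u K : ℝ} (hab : a ≤ b)
    (hsu : s ≤ u) (hn : ∀ x ∈ Icc a b, ∀ v ∈ Icc s u, HasDerivAt (fun t => n t x) (g v x * n v x) v)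
    (hnn : ∀ x ∈ Icc a b, ∀ v ∈ Icc s u, 0 ≤ n v x) (hrate : ∀ x ∈ Icc a b, ∀ v ∈ Icc s u, g v x ≤ K)
    (hs : ContinuousOn (n s) (Icc a b)) (hu : ContinuousOn (n u) (Icc a b)) :
    ∫ x in a..b, n u x ≤ (∫ x in a..b, n s x) * exp (K * (u - s)) := by
  rw [← intervalIntegral.integral_mul_const]
  refine intervalIntegral.integral_mono_on hab (hu.intervalIntegrable_of_Icc hab)
    ((hs.intervalIntegrable_of_Icc hab).mul_const _) fun x hx => ?_
  exact le_mul_exp_of_hasDerivAt_le hsu (hn x hx) fun v hv =>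
    mul_le_mul_of_nonneg_right (hrate x hx v hv) (hnn x hx v hv)

theorem eventually_mass_le_of_competition {n : ℝ → ℝ → ℝ} {ρ r d : ℝ → ℝ} {m : ℝ → ℝ → ℝ}
    {ρstar dmin dmax ε : ℝ} (hε : 0 < ε) (hρstar : 0 ≤ ρstar) (hdmin : 0 < dmin)
    (hd : ∀ x ∈ Icc (0:ℝ) 1, dmin ≤ d x ∧ d x ≤ dmax) (hr : ∀ x ∈ Icc (0:ℝ) 1, r x ≤ ρstar * d x)
    (hm : ∀ t > 0, ∀ x ∈ Icc (0:ℝ) 1, 0 ≤ m t x) (hρ : ∀ t, ρ t = ∫ x in (0:ℝ)..1, n t x)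
    (hn : ∀ x ∈ Icc (0:ℝ) 1, ∀ t > 0,
      HasDerivAt (fun s => n s x) ((r x - d x * ρ t - m t x) * n t x) t)
    (hnn : ∀ t ≥ 0, ∀ x ∈ Icc (0:ℝ) 1, 0 ≤ n t x) (hcont : ∀ t ≥ 0, ContinuousOn (n t) (Icc 0 1)) :
    ∀ᶠ t in atTop, ρ t ≤ ρstar + ε := by
  have hρnn : ∀ t ≥ 0, 0 ≤ ρ t := fun t ht =>
    (hρ t).symm ▸ intervalIntegral.integral_nonneg zero_le_one (hnn t ht)
  have hmass : ∀ s u K, 0 < s → s ≤ u →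
      (∀ x ∈ Icc (0:ℝ) 1, ∀ v ∈ Icc s u, r x - d x * ρ v - m v x ≤ K) →
      ρ u ≤ ρ s * exp (K * (u - s)) := by
    intro s u K hs hsu hK
    rw [hρ, hρ]
    exact integral_le_integral_mul_exp_of_rate_le zero_le_one hsu
      (fun x hx v hv => hn x hx v (hs.trans_le hv.1)) (fun x hx v hv => hnn v (hs.le.trans hv.1) x hx)
      hK (hcont s hs.le) (hcont u (hs.le.trans hsu))
  have hdmax : 0 ≤ dmax := hdmin.le.trans ((hd 0 (left_mem_Icc.2 zero_le_one)).1.trans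
    (hd 0 (left_mem_Icc.2 zero_le_one)).2)
  refine eventually_le_of_growth_of_decay (a := 1) (mul_nonneg hdmax hρstar) (mul_pos hdmin hε)
    (by linarith) (fun t ht => hρnn t (by linarith)) (fun s u hs hsu => ?_) (fun s u hs hsu hbig => ?_)
  · refine hmass s u _ (by linarith) hsu fun x hx v hv => ?_
    have hv₀ : 0 < v := by linarith [hv.1]
    have hdρ := mul_nonneg (hdmin.le.trans (hd x hx).1) (hρnn v hv₀.le)
    have hdρstar := mul_le_mul_of_nonneg_left (hd x hx).2 hρstar
    linarith [hr x hx, hm v hv₀ x hx]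
  · refine hmass s u _ (by linarith) hsu fun x hx v hv => ?_
    have hv₀ : 0 < v := by linarith [hv.1]
    have hdρ := mul_le_mul_of_nonneg_left (hbig v hv) (hdmin.le.trans (hd x hx).1)
    have hdε := mul_le_mul_of_nonneg_right (hd x hx).1 hε.le
    linarith [hr x hx, hm v hv₀ x hx]

theorem integral_mul_le_mul_integral {f g : ℝ → ℝ} {a b M : ℝ} (hab : a ≤ b)
    (hf : ContinuousOn f (Icc a b)) (hg : ContinuousOn g (Icc a b)) (hg₀ : ∀ x ∈ Icc a b, 0 ≤ g x)
    (hfM : ∀ x ∈ Icc a b, f x ≤ M) :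
    ∫ x in a..b, f x * g x ≤ M * ∫ x in a..b, g x := by
  rw [← intervalIntegral.integral_const_mul]
  exact intervalIntegral.integral_mono_on hab ((hf.mul hg).intervalIntegrable_of_Icc hab)
    ((hg.intervalIntegrable_of_Icc hab).const_mul M) fun x hx =>
    mul_le_mul_of_nonneg_right (hfM x hx) (hg₀ x hx)

theorem chi_limsup_bound_general
    (n l : ℝ → ℝ → ℝ) (r d μ ψ : ℝ → ℝ) (ω : ℝ → ℝ → ℝ)
    (ρ φ : ℝ → ℝ) (χ : ℝ → ℝ → ℝ) (ρstar : ℝ) (ωM : ℝ → ℝ)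
    (hdc : ContinuousOn d (Set.Icc 0 1))
    (hωc : ContinuousOn (fun q : ℝ × ℝ => ω q.1 q.2) (Set.Icc 0 1 ×ˢ Set.Icc 0 1))
    (hrpos : ∀ x ∈ Set.Icc (0:ℝ) 1, 0 < r x)
    (hdpos : ∀ x ∈ Set.Icc (0:ℝ) 1, 0 < d x)
    (hμpos : ∀ x ∈ Set.Icc (0:ℝ) 1, 0 < μ x)
    (hψpos : ∀ y ∈ Set.Icc (0:ℝ) 1, 0 < ψ y)
    (hωpos : ∀ x ∈ Set.Icc (0:ℝ) 1, ∀ y ∈ Set.Icc (0:ℝ) 1, 0 < ω x y)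
    (hρdef : ∀ t, ρ t = ∫ x in (0:ℝ)..1, n t x)
    (hφdef : ∀ t, φ t = ∫ y in (0:ℝ)..1, ψ y * l t y)
    (hχdef : ∀ t y, χ t y = ∫ x in (0:ℝ)..1, ω x y * n t x)
    (hnode : ∀ x ∈ Set.Icc (0:ℝ) 1, ∀ t > (0:ℝ),
      HasDerivAt (fun s => n s x) ((r x - d x * ρ t - μ x * φ t) * n t x) t)
    (hnnn : ∀ t ≥ (0:ℝ), ∀ x ∈ Set.Icc (0:ℝ) 1, 0 ≤ n t x)
    (hlnn : ∀ t ≥ (0:ℝ), ∀ y ∈ Set.Icc (0:ℝ) 1, 0 ≤ l t y)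
    (hncont : ∀ t ≥ (0:ℝ), ContinuousOn (n t) (Set.Icc 0 1))
    (hρstar : IsGreatest ((fun x => r x / d x) '' Set.Icc (0:ℝ) 1) ρstar)
    (hωM : ∀ y ∈ Set.Icc (0:ℝ) 1, IsGreatest ((fun x => ω x y) '' Set.Icc (0:ℝ) 1) (ωM y))
    :
    ∀ y ∈ Set.Icc (0:ℝ) 1, ∀ ε > 0, ∀ᶠ t in Filter.atTop, χ t y ≤ ωM y * ρstar + ε := by
  intro y hy ε hε
  obtain ⟨x₀, hx₀, hρstar_eq⟩ := hρstar.1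
  have hρstar_pos : 0 < ρstar := hρstar_eq ▸ div_pos (hrpos x₀ hx₀) (hdpos x₀ hx₀)
  obtain ⟨xmin, hxmin, hdmin⟩ := isCompact_Icc.exists_isMinOn (nonempty_Icc.2 zero_le_one) hdc
  obtain ⟨xmax, -, hdmax⟩ := isCompact_Icc.exists_isMaxOn (nonempty_Icc.2 zero_le_one) hdc
  have hφ : ∀ t ≥ 0, 0 ≤ φ t := fun t ht => (hφdef t).symm ▸
    intervalIntegral.integral_nonneg zero_le_one fun y hy => mul_nonneg (hψpos y hy).le (hlnn t ht y hy)
  obtain ⟨xω, hxω, hωM_eq⟩ := (hωM y hy).1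
  have hωM_pos : 0 < ωM y := hωM_eq ▸ hωpos xω hxω y hy
  have hρ := eventually_mass_le_of_competition (m := fun t x => μ x * φ t)
    (div_pos hε hωM_pos) hρstar_pos.le (hdpos xmin hxmin) (fun x hx => ⟨hdmin hx, hdmax hx⟩)
    (fun x hx => (div_le_iff₀ (hdpos x hx)).1 (hρstar.2 ⟨x, hx, rfl⟩))
    (fun t ht x hx => mul_nonneg (hμpos x hx).le (hφ t ht.le)) hρdef hnode hnnn hncont
  have hωy : ContinuousOn (fun x => ω x y) (Icc 0 1) :=
    hωc.comp (continuous_id.prodMk continuous_const).continuousOn fun x hx => ⟨hx, hy⟩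
  filter_upwards [hρ, eventually_ge_atTop 0] with t hρt ht
  calc χ t y ≤ ωM y * ρ t := by
        rw [hχdef, hρdef]
        exact integral_mul_le_mul_integral zero_le_one hωy (hncont t ht) (hnnn t ht)
          fun x hx => (hωM y hy).2 ⟨x, hx, rfl⟩
    _ ≤ ωM y * (ρstar + ε / ωM y) := by gcongr
    _ = ωM y * ρstar + ε := by field_simp

/-- limsup χ(t,y) ≤ ω^M(y) ρ⋆ for every y. -/
theorem chi_limsup_bound
    (n l p : ℝ → ℝ → ℝ) (r d μ ψ ν : ℝ → ℝ) (ω : ℝ → ℝ → ℝ)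
    (k₁ k₂ : ℝ) (ρ φ : ℝ → ℝ) (χ : ℝ → ℝ → ℝ) (ρstar : ℝ) (ωM : ℝ → ℝ)
    (hk₁ : 0 < k₁) (hk₂ : 0 < k₂)
    (hrc : ContinuousOn r (Set.Icc 0 1)) (hdc : ContinuousOn d (Set.Icc 0 1))
    (hμc : ContinuousOn μ (Set.Icc 0 1)) (hψc : ContinuousOn ψ (Set.Icc 0 1))
    (hνc : ContinuousOn ν (Set.Icc 0 1))
    (hωc : ContinuousOn (fun q : ℝ × ℝ => ω q.1 q.2) (Set.Icc 0 1 ×ˢ Set.Icc 0 1))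
    (hrpos : ∀ x ∈ Set.Icc (0:ℝ) 1, 0 < r x)
    (hdpos : ∀ x ∈ Set.Icc (0:ℝ) 1, 0 < d x)
    (hμpos : ∀ x ∈ Set.Icc (0:ℝ) 1, 0 < μ x)
    (hψpos : ∀ y ∈ Set.Icc (0:ℝ) 1, 0 < ψ y)
    (hνpos : ∀ y ∈ Set.Icc (0:ℝ) 1, 0 < ν y)
    (hωpos : ∀ x ∈ Set.Icc (0:ℝ) 1, ∀ y ∈ Set.Icc (0:ℝ) 1, 0 < ω x y)
    (hρdef : ∀ t, ρ t = ∫ x in (0:ℝ)..1, n t x)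
    (hφdef : ∀ t, φ t = ∫ y in (0:ℝ)..1, ψ y * l t y)
    (hχdef : ∀ t y, χ t y = ∫ x in (0:ℝ)..1, ω x y * n t x)
    (hnode : ∀ x ∈ Set.Icc (0:ℝ) 1, ∀ t > (0:ℝ),
      HasDerivAt (fun s => n s x) ((r x - d x * ρ t - μ x * φ t) * n t x) t)
    (hlode : ∀ y ∈ Set.Icc (0:ℝ) 1, ∀ t > (0:ℝ),
      HasDerivAt (fun s => l s y) (p t y - (ν y * ρ t + k₁) * l t y) t)
    (hpode : ∀ y ∈ Set.Icc (0:ℝ) 1, ∀ t > (0:ℝ),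
      HasDerivAt (fun s => p s y) (χ t y * p t y - k₂ * (p t y) ^ 2) t)
    (hnnn : ∀ t ≥ (0:ℝ), ∀ x ∈ Set.Icc (0:ℝ) 1, 0 ≤ n t x)
    (hlnn : ∀ t ≥ (0:ℝ), ∀ y ∈ Set.Icc (0:ℝ) 1, 0 ≤ l t y)
    (hpnn : ∀ t ≥ (0:ℝ), ∀ y ∈ Set.Icc (0:ℝ) 1, 0 ≤ p t y)
    (hncont : ∀ t ≥ (0:ℝ), ContinuousOn (n t) (Set.Icc 0 1))
    (hlcont : ∀ t ≥ (0:ℝ), ContinuousOn (l t) (Set.Icc 0 1))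
    (hpcont : ∀ t ≥ (0:ℝ), ContinuousOn (p t) (Set.Icc 0 1))
    (hρstar : IsGreatest ((fun x => r x / d x) '' Set.Icc (0:ℝ) 1) ρstar)
    (hωM : ∀ y ∈ Set.Icc (0:ℝ) 1, IsGreatest ((fun x => ω x y) '' Set.Icc (0:ℝ) 1) (ωM y))
    :
    ∀ y ∈ Set.Icc (0:ℝ) 1, ∀ ε > 0, ∀ᶠ t in Filter.atTop, χ t y ≤ ωM y * ρstar + ε :=
  chi_limsup_bound_general n l r d μ ψ ω ρ φ χ ρstar ωM hdc hωc hrpos hdpos hμpos hψpos hωpos hρdef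
    hφdef hχdef hnode hnnn hlnn hncont hρstar hωM
end

section
/- Under the integro-differential system (ide), for every y ∈ [0,1], limsup_{t→∞} p(t,y) ≤ p̄(y) := ω^M(y) ρ⋆ / k₂, where ω^M(y) = max_{x∈[0,1]} ω(x,y) and ρ⋆ = max_{x∈[0,1]} r(x)/d(x). -/
/-!
While the total mass `ρ = ∫ n` stays above `ρ⋆ + ε`, every trait has per-capita growth rate
`r - dρ - μφ ≤ d (ρ⋆ - ρ) ≤ -ε min d`, so `ρ` decays exponentially; and `ρ` never grows faster
than `exp (max d · ρ⋆ · t)`. Nothing is known about the continuity of `ρ` in time, and this growth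
bound replaces it: a function that decays exponentially while above a level `L > 0` and grows at
most exponentially must dip below `L`, and after its last visit below `L` it can only have risen
by a factor arbitrarily close to `1`, so it eventually stays below `L`. Hence eventually
`χ ≤ ω^M ρ ≤ ω^M (ρ⋆ + η)`, and the same argument applied to the logistic equation
`p' = (χ - k₂ p) p` keeps `p` eventually below `ω^M ρ⋆ / k₂ + ε`.
-/

open Set Filter Real Topology

theorem le_exp_mul_of_hasDerivAt_mul_of_le {f g : ℝ → ℝ} {a s t : ℝ} (hst : s ≤ t)
    (hf : ∀ u ∈ Icc s t, HasDerivAt f (g u * f u) u) (hf0 : ∀ u ∈ Icc s t, 0 ≤ f u)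
    (hg : ∀ u ∈ Icc s t, g u ≤ a) :
    f t ≤ exp (a * (t - s)) * f s := by
  have h := le_gronwallBound_of_liminf_deriv_right_le (δ := f s) (K := a) (ε := 0)
    (fun u hu => (hf u hu).continuousAt.continuousWithinAt)
    (fun u hu _ hr => (hf u (Ico_subset_Icc_self hu)).hasDerivWithinAt.liminf_right_slope_le hr)
    le_rfl
    (fun u hu => by
      have hu' := Ico_subset_Icc_self hu
      simpa using mul_le_mul_of_nonneg_right (hg u hu') (hf0 u hu'))
    t ⟨hst, le_rfl⟩
  rwa [gronwallBound_ε0, mul_comm] at h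

theorem integral_le_mul_integral_of_le_mul {f g : ℝ → ℝ} {a b C : ℝ} (hab : a ≤ b)
    (hf : ContinuousOn f (Icc a b)) (hg : ContinuousOn g (Icc a b))
    (hfg : ∀ x ∈ Icc a b, f x ≤ C * g x) :
    ∫ x in a..b, f x ≤ C * ∫ x in a..b, g x := by
  rw [← intervalIntegral.integral_const_mul]
  exact intervalIntegral.integral_mono_on hab (hf.intervalIntegrable_of_Icc hab)
    ((hg.intervalIntegrable_of_Icc hab).const_mul C) hfg

theorem le_of_exp_growth_of_not_increasing_above {f : ℝ → ℝ} {t₁ K L : ℝ} (hL : 0 ≤ L)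
    (h₁ : f t₁ < L)
    (hgrow : ∀ s t, t₁ ≤ s → s ≤ t → f t ≤ exp (K * (t - s)) * f s)
    (hstay : ∀ s t, t₁ ≤ s → s ≤ t → (∀ u ∈ Icc s t, L ≤ f u) → f t ≤ f s) :
    ∀ t ≥ t₁, f t ≤ L := by
  intro t ht
  by_contra! hgt
  set S := {u ∈ Icc t₁ t | f u < L}
  have hS : t₁ ∈ S := ⟨⟨le_rfl, ht⟩, h₁⟩
  have hSbdd : BddAbove S := ⟨t, fun u hu => hu.1.2⟩
  set s := sSup S
  have hs₁ : t₁ ≤ s := le_csSup hSbdd hS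
  have hst : s ≤ t := csSup_le ⟨t₁, hS⟩ fun u hu => hu.1.2
  -- After the last time `s` at which `f < L`, `f` does not increase; across `s` it grows by
  -- at most `exp (|K| * 2δ)`, from some `u > s - δ` with `f u < L` to `v = min (s + δ) t`.
  have hnear : ∀ δ > 0, f t ≤ exp (|K| * (2 * δ)) * L := by
    intro δ hδ
    obtain ⟨u, huS, hsu⟩ := exists_lt_of_lt_csSup ⟨t₁, hS⟩ (sub_lt_self s hδ)
    have hus : u ≤ s := le_csSup hSbdd huS
    obtain ⟨v, hsv, hvδ, hvt, hv⟩ : ∃ v, s ≤ v ∧ v ≤ s + δ ∧ v ≤ t ∧ (v = t ∨ s < v) := by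
      rcases le_total t (s + δ) with h | h
      · exact ⟨t, hst, h, le_rfl, Or.inl rfl⟩
      · exact ⟨s + δ, by linarith, le_rfl, h, Or.inr (by linarith)⟩
    have habove : ∀ w ∈ Icc v t, L ≤ f w := by
      intro w hw
      by_contra! hwL
      have hws : w ≤ s := le_csSup hSbdd ⟨⟨hs₁.trans (hsv.trans hw.1), hw.2⟩, hwL⟩
      rcases hv with rfl | hsv'
      · obtain rfl : w = v := le_antisymm hw.2 hw.1
        linarith
      · linarith [hw.1]
    have hexp : exp (K * (v - u)) ≤ exp (|K| * (2 * δ)) := exp_le_exp.2 <|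
      calc K * (v - u) ≤ |K| * (v - u) := mul_le_mul_of_nonneg_right (le_abs_self K) (by linarith)
        _ ≤ |K| * (2 * δ) := by gcongr; linarith
    calc f t ≤ f v := hstay v t (hs₁.trans hsv) hvt habove
      _ ≤ exp (K * (v - u)) * f u := hgrow u v huS.1.1 (hus.trans hsv)
      _ ≤ exp (K * (v - u)) * L := by gcongr; exact huS.2.le
      _ ≤ exp (|K| * (2 * δ)) * L := by gcongr
  have hlim : Tendsto (fun δ => exp (|K| * (2 * δ)) * L) (𝓝[>] 0) (𝓝 L) :=
    ((by fun_prop : Continuous fun δ => exp (|K| * (2 * δ)) * L).tendsto' 0 L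
      (by simp)).mono_left nhdsWithin_le_nhds
  obtain ⟨δ, hδt, hδ⟩ := ((hlim.eventually (gt_mem_nhds hgt)).and self_mem_nhdsWithin).exists
  linarith [hnear δ hδ]

theorem eventually_le_of_exp_growth_of_exp_decay_above {f : ℝ → ℝ} {T K κ L : ℝ}
    (hκ : 0 < κ) (hL : 0 < L)
    (hgrow : ∀ s t, T ≤ s → s ≤ t → f t ≤ exp (K * (t - s)) * f s)
    (hdecay : ∀ s t, T ≤ s → s ≤ t → (∀ u ∈ Icc s t, L ≤ f u) →
      f t ≤ exp (-κ * (t - s)) * f s) :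
    ∀ᶠ t in atTop, f t ≤ L := by
  obtain ⟨t₁, hTt₁, ht₁⟩ : ∃ t₁ ≥ T, f t₁ < L := by
    by_contra! hge
    have hlim : Tendsto (fun t => exp (-κ * (t - T)) * f T) atTop (𝓝 0) := by
      have h := (tendsto_atTop_add_const_right atTop (-T) tendsto_id).const_mul_atTop_of_neg
        (neg_neg_of_pos hκ)
      simpa [← sub_eq_add_neg] using (tendsto_exp_atBot.comp h).mul_const (f T)
    obtain ⟨t, hsmall, hTt⟩ :=
      ((hlim.eventually (gt_mem_nhds hL)).and (eventually_ge_atTop T)).exists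
    linarith [hge t hTt, hdecay T t le_rfl hTt fun u hu => hge u hu.1]
  have hstay : ∀ s t, t₁ ≤ s → s ≤ t → (∀ u ∈ Icc s t, L ≤ f u) → f t ≤ f s := by
    intro s t hs hst habove
    have hfs : 0 ≤ f s := hL.le.trans (habove s ⟨le_rfl, hst⟩)
    calc f t ≤ exp (-κ * (t - s)) * f s := hdecay s t (hTt₁.trans hs) hst habove
      _ ≤ 1 * f s := by
        gcongr
        exact exp_le_one_iff.2 (mul_nonpos_of_nonpos_of_nonneg (by linarith) (by linarith))
      _ = f s := one_mul _
  exact eventually_atTop.2 ⟨t₁, le_of_exp_growth_of_not_increasing_above hL.le ht₁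
    (fun s t hs => hgrow s t (hTt₁.trans hs)) hstay⟩

theorem eventually_le_of_logistic {f c : ℝ → ℝ} {k C : ℝ} (hk : 0 < k) (hC : 0 ≤ C)
    (hf : ∀ t > 0, HasDerivAt f (c t * f t - k * f t ^ 2) t) (hf0 : ∀ t ≥ 0, 0 ≤ f t)
    (hc : ∀ η > 0, ∀ᶠ t in atTop, c t ≤ C + η) :
    ∀ ε > 0, ∀ᶠ t in atTop, f t ≤ C / k + ε := by
  intro ε hε
  obtain ⟨T, hT⟩ := eventually_atTop.1 (hc (k * ε / 2) (by positivity))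
  have hbound : ∀ a s t, max T 1 ≤ s → s ≤ t → (∀ u ∈ Icc s t, c u - k * f u ≤ a) →
      f t ≤ exp (a * (t - s)) * f s := by
    intro a s t hs hst hrate
    have hs₀ : 0 < s := lt_of_lt_of_le one_pos (le_of_max_le_right hs)
    exact le_exp_mul_of_hasDerivAt_mul_of_le hst
      (fun u hu => (hf u (hs₀.trans_le hu.1)).congr_deriv (by ring))
      (fun u hu => hf0 u (hs₀.le.trans hu.1)) hrate
  have hcT : ∀ u ≥ max T 1, c u ≤ C + k * ε / 2 := fun u hu => hT u ((le_max_left T 1).trans hu)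
  have hkL : k * (C / k + ε) = C + k * ε := by field_simp
  refine eventually_le_of_exp_growth_of_exp_decay_above (T := max T 1) (K := C + k * ε / 2)
    (κ := k * ε / 2) (by positivity) (by positivity)
    (fun s t hs hst => hbound _ s t hs hst fun u hu => ?_)
    (fun s t hs hst habove => hbound _ s t hs hst fun u hu => ?_)
  · have hfu : 0 ≤ f u := hf0 u (by linarith [le_max_right T 1, hu.1])
    nlinarith [hcT u (hs.trans hu.1)]
  · nlinarith [hcT u (hs.trans hu.1), habove u hu]

theorem eventually_integral_le_of_rate_le {n g : ℝ → ℝ → ℝ} {d ρ : ℝ → ℝ} {ρstar : ℝ}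
    (hdc : ContinuousOn d (Icc 0 1)) (hdpos : ∀ x ∈ Icc (0:ℝ) 1, 0 < d x) (hρstar : 0 ≤ ρstar)
    (hρdef : ∀ t, ρ t = ∫ x in (0:ℝ)..1, n t x)
    (hnode : ∀ x ∈ Icc (0:ℝ) 1, ∀ t > (0:ℝ), HasDerivAt (fun s => n s x) (g t x * n t x) t)
    (hg : ∀ x ∈ Icc (0:ℝ) 1, ∀ t > (0:ℝ), g t x ≤ d x * (ρstar - ρ t))
    (hnnn : ∀ t ≥ (0:ℝ), ∀ x ∈ Icc (0:ℝ) 1, 0 ≤ n t x)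
    (hncont : ∀ t ≥ (0:ℝ), ContinuousOn (n t) (Icc 0 1)) :
    ∀ ε > 0, ∀ᶠ t in atTop, ρ t ≤ ρstar + ε := by
  intro ε hε
  obtain ⟨dM, hdM⟩ := isCompact_Icc.bddAbove_image hdc
  obtain ⟨xm, hxm, hmin⟩ := isCompact_Icc.exists_isMinOn (nonempty_Icc.2 zero_le_one) hdc
  have hρ0 : ∀ t ≥ 0, 0 ≤ ρ t := fun t ht =>
    (hρdef t).symm ▸ intervalIntegral.integral_nonneg zero_le_one (hnnn t ht)
  have hbound : ∀ a s t, 1 ≤ s → s ≤ t → (∀ x ∈ Icc (0:ℝ) 1, ∀ u ∈ Icc s t, g u x ≤ a) →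
      ρ t ≤ exp (a * (t - s)) * ρ s := by
    intro a s t hs hst hrate
    rw [hρdef, hρdef]
    exact integral_le_mul_integral_of_le_mul zero_le_one (hncont t (by linarith))
      (hncont s (by linarith)) fun x hx => le_exp_mul_of_hasDerivAt_mul_of_le hst
        (fun u hu => hnode x hx u (by linarith [hu.1]))
        (fun u hu => hnnn u (by linarith [hu.1]) x hx) (hrate x hx)
  refine eventually_le_of_exp_growth_of_exp_decay_above (T := 1) (K := dM * ρstar)
    (κ := d xm * ε) (mul_pos (hdpos xm hxm) hε) (by positivity)
    (fun s t hs hst => hbound _ s t hs hst fun x hx u hu => ?_)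
    (fun s t hs hst habove => hbound _ s t hs hst fun x hx u hu => ?_)
  · have hu₀ : 0 < u := by linarith [hu.1]
    nlinarith [hg x hx u hu₀, hdM (mem_image_of_mem d hx), hρ0 u hu₀.le, hdpos x hx]
  · have hu₀ : 0 < u := by linarith [hu.1]
    have hdx : d xm ≤ d x := hmin hx
    nlinarith [hg x hx u hu₀, mul_le_mul_of_nonneg_left (habove u hu) (hdpos x hx).le,
      mul_le_mul_of_nonneg_right hdx hε.le]

theorem naive_cells_limsup_bound_general
    (n l p : ℝ → ℝ → ℝ) (r d μ ψ : ℝ → ℝ) (ω : ℝ → ℝ → ℝ)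
    (k₂ : ℝ) (ρ φ : ℝ → ℝ) (χ : ℝ → ℝ → ℝ) (ρstar : ℝ) (ωM : ℝ → ℝ)
    (hk₂ : 0 < k₂)
    (hdc : ContinuousOn d (Set.Icc 0 1))
    (hωc : ContinuousOn (fun q : ℝ × ℝ => ω q.1 q.2) (Set.Icc 0 1 ×ˢ Set.Icc 0 1))
    (hrpos : ∀ x ∈ Set.Icc (0:ℝ) 1, 0 < r x)
    (hdpos : ∀ x ∈ Set.Icc (0:ℝ) 1, 0 < d x)
    (hμpos : ∀ x ∈ Set.Icc (0:ℝ) 1, 0 < μ x)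
    (hψpos : ∀ y ∈ Set.Icc (0:ℝ) 1, 0 < ψ y)
    (hωpos : ∀ x ∈ Set.Icc (0:ℝ) 1, ∀ y ∈ Set.Icc (0:ℝ) 1, 0 < ω x y)
    (hρdef : ∀ t, ρ t = ∫ x in (0:ℝ)..1, n t x)
    (hφdef : ∀ t, φ t = ∫ y in (0:ℝ)..1, ψ y * l t y)
    (hχdef : ∀ t y, χ t y = ∫ x in (0:ℝ)..1, ω x y * n t x)
    (hnode : ∀ x ∈ Set.Icc (0:ℝ) 1, ∀ t > (0:ℝ),
      HasDerivAt (fun s => n s x) ((r x - d x * ρ t - μ x * φ t) * n t x) t)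
    (hpode : ∀ y ∈ Set.Icc (0:ℝ) 1, ∀ t > (0:ℝ),
      HasDerivAt (fun s => p s y) (χ t y * p t y - k₂ * (p t y) ^ 2) t)
    (hnnn : ∀ t ≥ (0:ℝ), ∀ x ∈ Set.Icc (0:ℝ) 1, 0 ≤ n t x)
    (hlnn : ∀ t ≥ (0:ℝ), ∀ y ∈ Set.Icc (0:ℝ) 1, 0 ≤ l t y)
    (hpnn : ∀ t ≥ (0:ℝ), ∀ y ∈ Set.Icc (0:ℝ) 1, 0 ≤ p t y)
    (hncont : ∀ t ≥ (0:ℝ), ContinuousOn (n t) (Set.Icc 0 1))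
    (hρstar : IsGreatest ((fun x => r x / d x) '' Set.Icc (0:ℝ) 1) ρstar)
    (hωM : ∀ y ∈ Set.Icc (0:ℝ) 1, IsGreatest ((fun x => ω x y) '' Set.Icc (0:ℝ) 1) (ωM y))
    :
    ∀ y ∈ Set.Icc (0:ℝ) 1, ∀ ε > 0, ∀ᶠ t in Filter.atTop, p t y ≤ ωM y * ρstar / k₂ + ε := by
  intro y hy ε hε
  obtain ⟨x₀, hx₀, hρstar_eq⟩ := hρstar.1
  have hρstar0 : 0 < ρstar := hρstar_eq ▸ div_pos (hrpos x₀ hx₀) (hdpos x₀ hx₀)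
  have hρ := eventually_integral_le_of_rate_le hdc hdpos hρstar0.le hρdef hnode
    (fun x hx t ht => by
      have hrd := (div_le_iff₀ (hdpos x hx)).1 (hρstar.2 ⟨x, hx, rfl⟩)
      have hφ : 0 ≤ φ t := (hφdef t).symm ▸ intervalIntegral.integral_nonneg zero_le_one
        fun y hy => mul_nonneg (hψpos y hy).le (hlnn t ht.le y hy)
      nlinarith [mul_nonneg (hμpos x hx).le hφ])
    hnnn hncont
  obtain ⟨x₁, hx₁, hωM_eq⟩ := (hωM y hy).1
  have hωM0 : 0 < ωM y := hωM_eq ▸ hωpos x₁ hx₁ y hy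
  have hωy : ContinuousOn (fun x => ω x y) (Icc 0 1) :=
    hωc.comp (continuousOn_id.prodMk continuousOn_const) fun x hx => ⟨hx, hy⟩
  refine eventually_le_of_logistic hk₂ (by positivity) (hpode y hy) (fun t ht => hpnn t ht y hy)
    (fun η hη => ?_) ε hε
  filter_upwards [hρ (η / ωM y) (by positivity), eventually_ge_atTop 0] with t hρt ht
  calc χ t y ≤ ωM y * ρ t := by
        rw [hχdef, hρdef]
        exact integral_le_mul_integral_of_le_mul zero_le_one (hωy.mul (hncont t ht))
          (hncont t ht) fun x hx =>
            mul_le_mul_of_nonneg_right ((hωM y hy).2 ⟨x, hx, rfl⟩) (hnnn t ht x hx)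
    _ ≤ ωM y * (ρstar + η / ωM y) := by gcongr
    _ = ωM y * ρstar + η := by field_simp

/-- limsup p(t,y) ≤ p̄(y) = ω^M(y) ρ⋆ / k₂ for every y. -/
theorem naive_cells_limsup_bound
    (n l p : ℝ → ℝ → ℝ) (r d μ ψ ν : ℝ → ℝ) (ω : ℝ → ℝ → ℝ)
    (k₁ k₂ : ℝ) (ρ φ : ℝ → ℝ) (χ : ℝ → ℝ → ℝ) (ρstar : ℝ) (ωM : ℝ → ℝ)
    (hk₁ : 0 < k₁) (hk₂ : 0 < k₂)
    (hrc : ContinuousOn r (Set.Icc 0 1)) (hdc : ContinuousOn d (Set.Icc 0 1))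
    (hμc : ContinuousOn μ (Set.Icc 0 1)) (hψc : ContinuousOn ψ (Set.Icc 0 1))
    (hνc : ContinuousOn ν (Set.Icc 0 1))
    (hωc : ContinuousOn (fun q : ℝ × ℝ => ω q.1 q.2) (Set.Icc 0 1 ×ˢ Set.Icc 0 1))
    (hrpos : ∀ x ∈ Set.Icc (0:ℝ) 1, 0 < r x)
    (hdpos : ∀ x ∈ Set.Icc (0:ℝ) 1, 0 < d x)
    (hμpos : ∀ x ∈ Set.Icc (0:ℝ) 1, 0 < μ x)
    (hψpos : ∀ y ∈ Set.Icc (0:ℝ) 1, 0 < ψ y)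
    (hνpos : ∀ y ∈ Set.Icc (0:ℝ) 1, 0 < ν y)
    (hωpos : ∀ x ∈ Set.Icc (0:ℝ) 1, ∀ y ∈ Set.Icc (0:ℝ) 1, 0 < ω x y)
    (hρdef : ∀ t, ρ t = ∫ x in (0:ℝ)..1, n t x)
    (hφdef : ∀ t, φ t = ∫ y in (0:ℝ)..1, ψ y * l t y)
    (hχdef : ∀ t y, χ t y = ∫ x in (0:ℝ)..1, ω x y * n t x)
    (hnode : ∀ x ∈ Set.Icc (0:ℝ) 1, ∀ t > (0:ℝ),
      HasDerivAt (fun s => n s x) ((r x - d x * ρ t - μ x * φ t) * n t x) t)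
    (hlode : ∀ y ∈ Set.Icc (0:ℝ) 1, ∀ t > (0:ℝ),
      HasDerivAt (fun s => l s y) (p t y - (ν y * ρ t + k₁) * l t y) t)
    (hpode : ∀ y ∈ Set.Icc (0:ℝ) 1, ∀ t > (0:ℝ),
      HasDerivAt (fun s => p s y) (χ t y * p t y - k₂ * (p t y) ^ 2) t)
    (hnnn : ∀ t ≥ (0:ℝ), ∀ x ∈ Set.Icc (0:ℝ) 1, 0 ≤ n t x)
    (hlnn : ∀ t ≥ (0:ℝ), ∀ y ∈ Set.Icc (0:ℝ) 1, 0 ≤ l t y)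
    (hpnn : ∀ t ≥ (0:ℝ), ∀ y ∈ Set.Icc (0:ℝ) 1, 0 ≤ p t y)
    (hncont : ∀ t ≥ (0:ℝ), ContinuousOn (n t) (Set.Icc 0 1))
    (hlcont : ∀ t ≥ (0:ℝ), ContinuousOn (l t) (Set.Icc 0 1))
    (hpcont : ∀ t ≥ (0:ℝ), ContinuousOn (p t) (Set.Icc 0 1))
    (hρstar : IsGreatest ((fun x => r x / d x) '' Set.Icc (0:ℝ) 1) ρstar)
    (hωM : ∀ y ∈ Set.Icc (0:ℝ) 1, IsGreatest ((fun x => ω x y) '' Set.Icc (0:ℝ) 1) (ωM y))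
    :
    ∀ y ∈ Set.Icc (0:ℝ) 1, ∀ ε > 0, ∀ᶠ t in Filter.atTop, p t y ≤ ωM y * ρstar / k₂ + ε :=
  naive_cells_limsup_bound_general n l p r d μ ψ ω k₂ ρ φ χ ρstar ωM hk₂ hdc hωc hrpos hdpos hμpos
    hψpos hωpos hρdef hφdef hχdef hnode hpode hnnn hlnn hpnn hncont hρstar hωM
end

section
/- Under the integro-differential system (ide), for every y ∈ [0,1], limsup_{t→∞} ℓ(t,y) ≤ ℓ̄(y) := p̄(y)/k₁, where p̄(y) = ω^M(y) ρ⋆ / k₂, ω^M(y) = max_{x∈[0,1]} ω(x,y), and ρ⋆ = max_{x∈[0,1]} r(x)/d(x). -/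
/-!
Since `r ≤ d ρ⋆` and the loss terms are nonnegative, every `n(·,x)` grows at per-capita rate
at most `d(x) (ρ⋆ - ρ)`. Integrating the resulting exponential bounds over `x`, the total mass
`ρ` grows at most exponentially, does not increase while `ρ ≥ ρ⋆`, and decays exponentially
while `ρ ≥ ρ⋆ + δ`; a supremum argument turns these into `limsup ρ ≤ ρ⋆` without any continuity
of `ρ` in time. Then `χ(·,y) ≤ ω^M(y) ρ`, and comparison with linear equations (Grönwall) gives
`limsup p ≤ ω^M ρ⋆ / k₂` and `limsup ℓ ≤ limsup p / k₁`.
-/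

open Set Filter Topology Real MeasureTheory

lemma le_gronwallBound_of_hasDerivAt {f f' : ℝ → ℝ} {δ K ε a b : ℝ}
    (hf : ∀ x ∈ Icc a b, HasDerivAt f (f' x) x) (ha : f a ≤ δ)
    (bound : ∀ x ∈ Ico a b, f' x ≤ K * f x + ε) :
    ∀ x ∈ Icc a b, f x ≤ gronwallBound δ K ε (x - a) :=
  le_gronwallBound_of_liminf_deriv_right_le
    (fun x hx => (hf x hx).continuousAt.continuousWithinAt)
    (fun x hx _ hr =>
      (hf x (Ico_subset_Icc_self hx)).hasDerivWithinAt.liminf_right_slope_le hr)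
    ha bound

lemma tendsto_gronwallBound_atTop {δ K ε : ℝ} (hK : K < 0) :
    Tendsto (gronwallBound δ K ε) atTop (𝓝 (-(ε / K))) := by
  rw [gronwallBound_of_K_ne_0 hK.ne]
  have hexp : Tendsto (fun x => exp (K * x)) atTop (𝓝 0) :=
    tendsto_exp_atBot.comp (tendsto_id.const_mul_atTop_of_neg hK)
  simpa using (hexp.const_mul δ).add ((hexp.sub_const 1).const_mul (ε / K))

lemma le_mul_exp_of_hasDerivAt_mul {f g : ℝ → ℝ} {s t c : ℝ} (hst : s ≤ t)
    (hf : ∀ u ∈ Icc s t, HasDerivAt f (g u * f u) u) (hnn : ∀ u ∈ Icc s t, 0 ≤ f u)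
    (hg : ∀ u ∈ Icc s t, g u ≤ c) :
    f t ≤ f s * exp (c * (t - s)) := by
  have bound : ∀ u ∈ Ico s t, g u * f u ≤ c * f u + 0 := fun u hu => by
    simpa using mul_le_mul_of_nonneg_right (hg u (Ico_subset_Icc_self hu))
      (hnn u (Ico_subset_Icc_self hu))
  simpa [gronwallBound_ε0] using
    le_gronwallBound_of_hasDerivAt hf le_rfl bound t ⟨hst, le_rfl⟩

/-- `limsup_{t → ∞} f t ≤ A`, without the boundedness side conditions of `Filter.limsup`. -/
def LimsupLE (f : ℝ → ℝ) (A : ℝ) : Prop := ∀ ε > 0, ∀ᶠ t in atTop, f t ≤ A + ε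

namespace LimsupLE

lemma of_forall_pos {f : ℝ → ℝ} {A : ℝ} (h : ∀ δ > 0, LimsupLE f (A + δ)) : LimsupLE f A :=
  fun ε hε => by simpa [add_assoc] using h (ε / 2) (half_pos hε) (ε / 2) (half_pos hε)

lemma mono {f g : ℝ → ℝ} {A : ℝ} (hf : LimsupLE f A) (hgf : ∀ᶠ t in atTop, g t ≤ f t) :
    LimsupLE g A :=
  fun ε hε => (hgf.and (hf ε hε)).mono fun _ h => h.1.trans h.2

lemma const_mul {f : ℝ → ℝ} {A c : ℝ} (hc : 0 < c) (hf : LimsupLE f A) :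
    LimsupLE (fun t => c * f t) (c * A) :=
  fun ε hε => (hf (ε / c) (div_pos hε hc)).mono fun t ht =>
    calc c * f t ≤ c * (A + ε / c) := mul_le_mul_of_nonneg_left ht hc.le
      _ = c * A + ε := by field_simp

lemma of_hasDerivAt_le_sub_mul {f f' : ℝ → ℝ} {A c : ℝ} (hc : 0 < c)
    (hf : ∀ᶠ t in atTop, HasDerivAt f (f' t) t) (hle : ∀ᶠ t in atTop, f' t ≤ A - c * f t) :
    LimsupLE f (A / c) := by
  intro ε hε
  obtain ⟨T, hT⟩ := eventually_atTop.1 (hf.and hle)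
  have hbound : ∀ t ≥ T, f t ≤ gronwallBound (f T) (-c) A (t - T) := fun t ht =>
    le_gronwallBound_of_hasDerivAt (fun u hu => (hT u hu.1).1) le_rfl
      (fun u hu => by linarith [(hT u hu.1).2]) t ⟨ht, le_rfl⟩
  have hlim : Tendsto (fun t => gronwallBound (f T) (-c) A (t - T)) atTop (𝓝 (A / c)) := by
    simpa [neg_div, div_neg, Function.comp_def, ← sub_eq_add_neg] using
      (tendsto_gronwallBound_atTop (δ := f T) (ε := A) (neg_lt_zero.2 hc)).comp
        (tendsto_atTop_add_const_right atTop (-T) tendsto_id)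
  filter_upwards [hlim.eventually (gt_mem_nhds (lt_add_of_pos_right _ hε)),
    eventually_ge_atTop T] with t hlt ht
  exact (hbound t ht).trans hlt.le

lemma of_hasDerivAt_le {f f' g : ℝ → ℝ} {A c : ℝ} (hc : 0 < c) (hg : LimsupLE g A)
    (hf : ∀ᶠ t in atTop, HasDerivAt f (f' t) t) (hle : ∀ᶠ t in atTop, f' t ≤ g t - c * f t) :
    LimsupLE f (A / c) :=
  of_forall_pos fun δ hδ => by
    have := of_hasDerivAt_le_sub_mul (A := A + c * δ) hc hf <|
      (hle.and (hg (c * δ) (mul_pos hc hδ))).mono fun t h => by linarith [h.1, h.2]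
    rwa [add_div, mul_div_cancel_left₀ _ hc.ne'] at this

lemma of_hasDerivAt_logistic {p χ : ℝ → ℝ} {a k : ℝ} (ha : 0 ≤ a) (hk : 0 < k)
    (hχ : LimsupLE χ a) (hp : ∀ᶠ t in atTop, HasDerivAt p (χ t * p t - k * p t ^ 2) t)
    (hpnn : ∀ᶠ t in atTop, 0 ≤ p t) :
    LimsupLE p (a / k) :=
  of_forall_pos fun δ hδ => by
    set b := a + k * δ
    have hb : 0 < b := by positivity
    have := of_hasDerivAt_le_sub_mul (A := b ^ 2 / k) hb hp <|
      ((hχ (k * δ) (mul_pos hk hδ)).and hpnn).mono fun t ⟨hχt, hpt⟩ => by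
        -- `b p - k p² ≤ b² / k - b p` is `(b - k p)² ≥ 0`
        have hsq :
            b ^ 2 / k - b * p t - (b * p t - k * p t ^ 2) = (b - k * p t) ^ 2 / k := by
          field_simp
        nlinarith [mul_le_mul_of_nonneg_right hχt hpt,
          div_nonneg (sq_nonneg (b - k * p t)) hk.le]
    convert this using 1
    simp only [b]
    field_simp

end LimsupLE

lemma le_max_of_le_mul_exp {f : ℝ → ℝ} {a c L : ℝ} (hc : 0 ≤ c) (hL : 0 ≤ L)
    (hgrow : ∀ s t, a < s → s ≤ t → f t ≤ f s * exp (c * (t - s)))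
    (hanti : ∀ s t, a < s → s ≤ t → (∀ u ∈ Icc s t, L ≤ f u) → f t ≤ f s)
    {s t : ℝ} (hs : a < s) (hst : s ≤ t) :
    f t ≤ max (f s) L := by
  set m := max (f s) L
  by_contra! hm
  set S := {u ∈ Icc s t | f u ≤ m}
  have hsS : s ∈ S := ⟨left_mem_Icc.2 hst, le_max_left _ _⟩
  have hbdd : BddAbove S := ⟨t, fun u hu => hu.1.2⟩
  -- compare `f t` with `f u` for `u ∈ S` close to `sSup S`: past `sSup S`, `f > m ≥ L`
  have hclose : ∀ η > 0, f t ≤ m * exp (c * η) := by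
    intro η hη
    obtain ⟨u, huS, hu⟩ := exists_lt_of_lt_csSup ⟨s, hsS⟩ (sub_lt_self (sSup S) hη)
    obtain ⟨v, hv⟩ : ∃ v, v = min (u + η) t := ⟨_, rfl⟩
    have hvt : v ≤ t := hv ▸ min_le_right _ _
    have hvη : v ≤ u + η := hv ▸ min_le_left _ _
    have huv : u ≤ v := hv ▸ le_min (by linarith) huS.1.2
    have hfv : ∀ w ∈ Icc v t, L ≤ f w := by
      intro w hw
      have hmw : m < f w := by
        by_contra! hwm
        have hwS : w ≤ sSup S := le_csSup hbdd ⟨⟨huS.1.1.trans (huv.trans hw.1), hw.2⟩, hwm⟩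
        rcases (hv ▸ min_choice (u + η) t : v = u + η ∨ v = t) with hvu | hvt
        · linarith [hw.1]
        · exact hm.not_ge (le_antisymm hw.2 (hvt ▸ hw.1) ▸ hwm)
      exact (le_max_right _ _).trans hmw.le
    calc f t ≤ f v := hanti v t (hs.trans_le (huS.1.1.trans huv)) hvt hfv
      _ ≤ f u * exp (c * (v - u)) := hgrow u v (hs.trans_le huS.1.1) huv
      _ ≤ m * exp (c * η) :=
        mul_le_mul huS.2 (exp_le_exp.2 (mul_le_mul_of_nonneg_left (by linarith) hc))
          (exp_pos _).le (hL.trans (le_max_right _ _))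
  have hlim : Tendsto (fun η => m * exp (c * η)) (𝓝[>] 0) (𝓝 m) := by
    have : Continuous fun η => m * exp (c * η) := by fun_prop
    simpa using (this.tendsto 0).mono_left nhdsWithin_le_nhds
  exact hm.not_ge (ge_of_tendsto hlim (eventually_mem_nhdsWithin.mono hclose))

lemma frequently_le_of_le_mul_exp_neg {f : ℝ → ℝ} {a κ ℓ : ℝ} (hκ : 0 < κ) (hℓ : 0 < ℓ)
    (hdecay : ∀ s t, a < s → s ≤ t → (∀ u ∈ Icc s t, ℓ ≤ f u) →
      f t ≤ f s * exp (-κ * (t - s))) :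
    ∃ᶠ t in atTop, f t ≤ ℓ := by
  intro h
  obtain ⟨T, hT⟩ := eventually_atTop.1 (h.and (eventually_gt_atTop a))
  have hlim : Tendsto (fun t => f T * exp (-κ * (t - T))) atTop (𝓝 0) := by
    have := tendsto_exp_atBot.comp ((tendsto_atTop_add_const_right atTop (-T)
      tendsto_id).const_mul_atTop_of_neg (neg_lt_zero.2 hκ))
    simpa [Function.comp_def, ← sub_eq_add_neg] using this.const_mul (f T)
  obtain ⟨t, hsmall, hTt⟩ :=
    ((hlim.eventually (gt_mem_nhds hℓ)).and (eventually_ge_atTop T)).exists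
  have hbig : ∀ u ∈ Icc T t, ℓ ≤ f u := fun u hu => (not_le.1 (hT u hu.1).1).le
  exact (hT t hTt).1 ((hdecay T t (hT T le_rfl).2 hTt hbig).trans hsmall.le)

theorem LimsupLE.of_le_mul_exp {f : ℝ → ℝ} {a c κ L : ℝ} (hc : 0 ≤ c) (hκ : 0 < κ)
    (hL : 0 < L)
    (hgrow : ∀ s t, a < s → s ≤ t → f t ≤ f s * exp (c * (t - s)))
    (hdecay : ∀ ℓ ≥ L, ∀ s t, a < s → s ≤ t → (∀ u ∈ Icc s t, ℓ ≤ f u) →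
      f t ≤ f s * exp (κ * (L - ℓ) * (t - s))) :
    LimsupLE f L := by
  intro δ hδ
  have hanti : ∀ s t, a < s → s ≤ t → (∀ u ∈ Icc s t, L ≤ f u) → f t ≤ f s := by
    intro s t hs hst hLf
    simpa using hdecay L le_rfl s t hs hst hLf
  have hfreq : ∃ᶠ t in atTop, f t ≤ L + δ := by
    refine frequently_le_of_le_mul_exp_neg (a := a) (mul_pos hκ hδ) (by positivity) ?_
    intro s t hs hst hbig
    convert hdecay (L + δ) (by linarith) s t hs hst hbig using 4
    ring
  obtain ⟨s, has, hs⟩ := frequently_atTop.1 hfreq (a + 1)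
  filter_upwards [eventually_ge_atTop s] with t hst
  exact (le_max_of_le_mul_exp hc hL.le hgrow hanti (by linarith) hst).trans
    (max_le hs (by linarith))

namespace intervalIntegral

lemma integral_mono_of_nonneg {f g : ℝ → ℝ} {a b : ℝ} (hab : a ≤ b)
    (hf : ∀ x ∈ Icc a b, 0 ≤ f x) (hg : IntervalIntegrable g volume a b)
    (hfg : ∀ x ∈ Icc a b, f x ≤ g x) :
    ∫ x in a..b, f x ≤ ∫ x in a..b, g x := by
  rw [integral_of_le hab, integral_of_le hab]
  exact MeasureTheory.integral_mono_of_nonneg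
    (ae_restrict_of_forall_mem measurableSet_Ioc fun x hx => hf x (Ioc_subset_Icc_self hx))
    hg.1.integrable
    (ae_restrict_of_forall_mem measurableSet_Ioc fun x hx => hfg x (Ioc_subset_Icc_self hx))

lemma integral_mul_le_mul_integral {w f : ℝ → ℝ} {a b M : ℝ} (hab : a ≤ b)
    (hw : ∀ x ∈ Icc a b, 0 ≤ w x) (hwM : ∀ x ∈ Icc a b, w x ≤ M)
    (hf : ∀ x ∈ Icc a b, 0 ≤ f x) (hfc : ContinuousOn f (Icc a b)) :
    ∫ x in a..b, w x * f x ≤ M * ∫ x in a..b, f x := by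
  rw [← integral_const_mul]
  exact integral_mono_of_nonneg hab (fun x hx => mul_nonneg (hw x hx) (hf x hx))
    ((continuousOn_const.mul hfc).intervalIntegrable_of_Icc hab)
    fun x hx => mul_le_mul_of_nonneg_right (hwM x hx) (hf x hx)

lemma integral_le_integral_mul_exp {n g : ℝ → ℝ → ℝ} {a b s t c : ℝ} (hab : a ≤ b)
    (hst : s ≤ t)
    (hn : ∀ x ∈ Icc a b, ∀ u ∈ Icc s t, HasDerivAt (fun τ => n τ x) (g u x * n u x) u)
    (hnn : ∀ x ∈ Icc a b, ∀ u ∈ Icc s t, 0 ≤ n u x)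
    (hcont : ContinuousOn (n s) (Icc a b))
    (hg : ∀ x ∈ Icc a b, ∀ u ∈ Icc s t, g u x ≤ c) :
    ∫ x in a..b, n t x ≤ (∫ x in a..b, n s x) * exp (c * (t - s)) := by
  rw [← integral_mul_const]
  exact integral_mono_of_nonneg hab (fun x hx => hnn x hx t ⟨hst, le_rfl⟩)
    ((hcont.mul continuousOn_const).intervalIntegrable_of_Icc hab) fun x hx =>
      le_mul_exp_of_hasDerivAt_mul (g := fun u => g u x) hst (hn x hx) (hnn x hx) (hg x hx)

end intervalIntegral

theorem LimsupLE.of_rate_le_mul_sub {n g : ℝ → ℝ → ℝ} {d ρ : ℝ → ℝ} {a b L : ℝ}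
    (hab : a ≤ b) (hL : 0 < L)
    (hdc : ContinuousOn d (Icc a b)) (hdpos : ∀ x ∈ Icc a b, 0 < d x)
    (hρ : ∀ t > 0, ρ t = ∫ x in a..b, n t x)
    (hn : ∀ x ∈ Icc a b, ∀ t > 0, HasDerivAt (fun s => n s x) (g t x * n t x) t)
    (hnn : ∀ t > 0, ∀ x ∈ Icc a b, 0 ≤ n t x)
    (hcont : ∀ t > 0, ContinuousOn (n t) (Icc a b))
    (hg : ∀ t > 0, ∀ x ∈ Icc a b, g t x ≤ d x * (L - ρ t)) :
    LimsupLE ρ L := by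
  obtain ⟨xm, hxm, hdmin⟩ := isCompact_Icc.exists_isMinOn (nonempty_Icc.2 hab) hdc
  obtain ⟨xM, hxM, hdmax⟩ := isCompact_Icc.exists_isMaxOn (nonempty_Icc.2 hab) hdc
  have hρnn : ∀ t > 0, 0 ≤ ρ t := fun t ht =>
    (hρ t ht).symm ▸ intervalIntegral.integral_nonneg hab (hnn t ht)
  have hbound : ∀ s t c, 0 < s → s ≤ t →
      (∀ u ∈ Icc s t, ∀ x ∈ Icc a b, d x * (L - ρ u) ≤ c) → ρ t ≤ ρ s * exp (c * (t - s)) := by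
    intro s t c hs hst hc
    have hpos : ∀ u ∈ Icc s t, 0 < u := fun u hu => hs.trans_le hu.1
    rw [hρ t (hs.trans_le hst), hρ s hs]
    exact intervalIntegral.integral_le_integral_mul_exp hab hst
      (fun x hx u hu => hn x hx u (hpos u hu)) (fun x hx u hu => hnn u (hpos u hu) x hx)
      (hcont s hs)
      (fun x hx u hu => (hg u (hpos u hu) x hx).trans (hc u hu x hx))
  refine LimsupLE.of_le_mul_exp (a := 0) (c := d xM * L) (κ := d xm)
    (mul_nonneg (hdpos xM hxM).le hL.le) (hdpos xm hxm) hL ?_ ?_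
  · refine fun s t hs hst => hbound s t _ hs hst fun u hu x hx => ?_
    calc d x * (L - ρ u) ≤ d x * L := by
          linarith [mul_nonneg (hdpos x hx).le (hρnn u (hs.trans_le hu.1))]
      _ ≤ d xM * L := mul_le_mul_of_nonneg_right (hdmax hx) hL.le
  · refine fun ℓ hℓ s t hs hst hbig => hbound s t _ hs hst fun u hu x hx => ?_
    calc d x * (L - ρ u) ≤ d x * (L - ℓ) :=
          mul_le_mul_of_nonneg_left (by linarith [hbig u hu]) (hdpos x hx).le
      _ ≤ d xm * (L - ℓ) := mul_le_mul_of_nonpos_right (hdmin hx) (by linarith)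

theorem effector_cells_limsup_bound_general
    (n l p : ℝ → ℝ → ℝ) (r d μ ψ ν : ℝ → ℝ) (ω : ℝ → ℝ → ℝ)
    (k₁ k₂ : ℝ) (ρ φ : ℝ → ℝ) (χ : ℝ → ℝ → ℝ) (ρstar : ℝ) (ωM : ℝ → ℝ)
    (hk₁ : 0 < k₁) (hk₂ : 0 < k₂)
    (hdc : ContinuousOn d (Set.Icc 0 1))
    (hrpos : ∀ x ∈ Set.Icc (0:ℝ) 1, 0 < r x)
    (hdpos : ∀ x ∈ Set.Icc (0:ℝ) 1, 0 < d x)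
    (hμpos : ∀ x ∈ Set.Icc (0:ℝ) 1, 0 < μ x)
    (hψpos : ∀ y ∈ Set.Icc (0:ℝ) 1, 0 < ψ y)
    (hνpos : ∀ y ∈ Set.Icc (0:ℝ) 1, 0 < ν y)
    (hωpos : ∀ x ∈ Set.Icc (0:ℝ) 1, ∀ y ∈ Set.Icc (0:ℝ) 1, 0 < ω x y)
    (hρdef : ∀ t, ρ t = ∫ x in (0:ℝ)..1, n t x)
    (hφdef : ∀ t, φ t = ∫ y in (0:ℝ)..1, ψ y * l t y)
    (hχdef : ∀ t y, χ t y = ∫ x in (0:ℝ)..1, ω x y * n t x)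
    (hnode : ∀ x ∈ Set.Icc (0:ℝ) 1, ∀ t > (0:ℝ),
      HasDerivAt (fun s => n s x) ((r x - d x * ρ t - μ x * φ t) * n t x) t)
    (hlode : ∀ y ∈ Set.Icc (0:ℝ) 1, ∀ t > (0:ℝ),
      HasDerivAt (fun s => l s y) (p t y - (ν y * ρ t + k₁) * l t y) t)
    (hpode : ∀ y ∈ Set.Icc (0:ℝ) 1, ∀ t > (0:ℝ),
      HasDerivAt (fun s => p s y) (χ t y * p t y - k₂ * (p t y) ^ 2) t)
    (hnnn : ∀ t ≥ (0:ℝ), ∀ x ∈ Set.Icc (0:ℝ) 1, 0 ≤ n t x)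
    (hlnn : ∀ t ≥ (0:ℝ), ∀ y ∈ Set.Icc (0:ℝ) 1, 0 ≤ l t y)
    (hpnn : ∀ t ≥ (0:ℝ), ∀ y ∈ Set.Icc (0:ℝ) 1, 0 ≤ p t y)
    (hncont : ∀ t ≥ (0:ℝ), ContinuousOn (n t) (Set.Icc 0 1))
    (hρstar : IsGreatest ((fun x => r x / d x) '' Set.Icc (0:ℝ) 1) ρstar)
    (hωM : ∀ y ∈ Set.Icc (0:ℝ) 1, IsGreatest ((fun x => ω x y) '' Set.Icc (0:ℝ) 1) (ωM y))
    :
    ∀ y ∈ Set.Icc (0:ℝ) 1, ∀ ε > 0, ∀ᶠ t in Filter.atTop,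
      l t y ≤ ωM y * ρstar / k₂ / k₁ + ε := by
  intro y hy
  have hρstar_pos : 0 < ρstar := by
    obtain ⟨x, hx, rfl⟩ := hρstar.1
    exact div_pos (hrpos x hx) (hdpos x hx)
  have hωM_pos : 0 < ωM y := by
    obtain ⟨x, hx, hxy⟩ := (hωM y hy).1
    exact hxy ▸ hωpos x hx y hy
  have hρnn : ∀ t ≥ 0, 0 ≤ ρ t := fun t ht =>
    (hρdef t).symm ▸ intervalIntegral.integral_nonneg zero_le_one (hnnn t ht)
  have hφnn : ∀ t ≥ 0, 0 ≤ φ t := fun t ht => (hφdef t).symm ▸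
    intervalIntegral.integral_nonneg zero_le_one fun z hz =>
      mul_nonneg (hψpos z hz).le (hlnn t ht z hz)
  have hρ : LimsupLE ρ ρstar := by
    refine LimsupLE.of_rate_le_mul_sub zero_le_one hρstar_pos hdc hdpos (fun t _ => hρdef t)
      hnode (fun t ht => hnnn t ht.le) (fun t ht => hncont t ht.le) fun t ht x hx => ?_
    have hr : r x ≤ d x * ρstar := (div_le_iff₀' (hdpos x hx)).1 (hρstar.2 ⟨x, hx, rfl⟩)
    nlinarith [mul_nonneg (hμpos x hx).le (hφnn t ht.le)]
  have hχ : ∀ t ≥ 0, χ t y ≤ ωM y * ρ t := fun t ht => by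
    rw [hχdef, hρdef]
    exact intervalIntegral.integral_mul_le_mul_integral zero_le_one
      (fun x hx => (hωpos x hx y hy).le) (fun x hx => (hωM y hy).2 ⟨x, hx, rfl⟩)
      (hnnn t ht) (hncont t ht)
  have hp : LimsupLE (fun t => p t y) (ωM y * ρstar / k₂) :=
    LimsupLE.of_hasDerivAt_logistic (mul_pos hωM_pos hρstar_pos).le hk₂
      ((hρ.const_mul hωM_pos).mono ((eventually_ge_atTop 0).mono hχ))
      ((eventually_gt_atTop 0).mono (hpode y hy))
      ((eventually_ge_atTop 0).mono fun t ht => hpnn t ht y hy)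
  refine LimsupLE.of_hasDerivAt_le hk₁ hp ((eventually_gt_atTop 0).mono (hlode y hy))
    ((eventually_ge_atTop 0).mono fun t ht => ?_)
  nlinarith [mul_nonneg (mul_nonneg (hνpos y hy).le (hρnn t ht)) (hlnn t ht y hy)]

/-- limsup ℓ(t,y) ≤ ℓ̄(y) = p̄(y)/k₁ = ω^M(y) ρ⋆ / (k₂ k₁) for every y. -/
theorem effector_cells_limsup_bound
    (n l p : ℝ → ℝ → ℝ) (r d μ ψ ν : ℝ → ℝ) (ω : ℝ → ℝ → ℝ)
    (k₁ k₂ : ℝ) (ρ φ : ℝ → ℝ) (χ : ℝ → ℝ → ℝ) (ρstar : ℝ) (ωM : ℝ → ℝ)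
    (hk₁ : 0 < k₁) (hk₂ : 0 < k₂)
    (hrc : ContinuousOn r (Set.Icc 0 1)) (hdc : ContinuousOn d (Set.Icc 0 1))
    (hμc : ContinuousOn μ (Set.Icc 0 1)) (hψc : ContinuousOn ψ (Set.Icc 0 1))
    (hνc : ContinuousOn ν (Set.Icc 0 1))
    (hωc : ContinuousOn (fun q : ℝ × ℝ => ω q.1 q.2) (Set.Icc 0 1 ×ˢ Set.Icc 0 1))
    (hrpos : ∀ x ∈ Set.Icc (0:ℝ) 1, 0 < r x)
    (hdpos : ∀ x ∈ Set.Icc (0:ℝ) 1, 0 < d x)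
    (hμpos : ∀ x ∈ Set.Icc (0:ℝ) 1, 0 < μ x)
    (hψpos : ∀ y ∈ Set.Icc (0:ℝ) 1, 0 < ψ y)
    (hνpos : ∀ y ∈ Set.Icc (0:ℝ) 1, 0 < ν y)
    (hωpos : ∀ x ∈ Set.Icc (0:ℝ) 1, ∀ y ∈ Set.Icc (0:ℝ) 1, 0 < ω x y)
    (hρdef : ∀ t, ρ t = ∫ x in (0:ℝ)..1, n t x)
    (hφdef : ∀ t, φ t = ∫ y in (0:ℝ)..1, ψ y * l t y)
    (hχdef : ∀ t y, χ t y = ∫ x in (0:ℝ)..1, ω x y * n t x)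
    (hnode : ∀ x ∈ Set.Icc (0:ℝ) 1, ∀ t > (0:ℝ),
      HasDerivAt (fun s => n s x) ((r x - d x * ρ t - μ x * φ t) * n t x) t)
    (hlode : ∀ y ∈ Set.Icc (0:ℝ) 1, ∀ t > (0:ℝ),
      HasDerivAt (fun s => l s y) (p t y - (ν y * ρ t + k₁) * l t y) t)
    (hpode : ∀ y ∈ Set.Icc (0:ℝ) 1, ∀ t > (0:ℝ),
      HasDerivAt (fun s => p s y) (χ t y * p t y - k₂ * (p t y) ^ 2) t)
    (hnnn : ∀ t ≥ (0:ℝ), ∀ x ∈ Set.Icc (0:ℝ) 1, 0 ≤ n t x)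
    (hlnn : ∀ t ≥ (0:ℝ), ∀ y ∈ Set.Icc (0:ℝ) 1, 0 ≤ l t y)
    (hpnn : ∀ t ≥ (0:ℝ), ∀ y ∈ Set.Icc (0:ℝ) 1, 0 ≤ p t y)
    (hncont : ∀ t ≥ (0:ℝ), ContinuousOn (n t) (Set.Icc 0 1))
    (hlcont : ∀ t ≥ (0:ℝ), ContinuousOn (l t) (Set.Icc 0 1))
    (hpcont : ∀ t ≥ (0:ℝ), ContinuousOn (p t) (Set.Icc 0 1))
    (hρstar : IsGreatest ((fun x => r x / d x) '' Set.Icc (0:ℝ) 1) ρstar)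
    (hωM : ∀ y ∈ Set.Icc (0:ℝ) 1, IsGreatest ((fun x => ω x y) '' Set.Icc (0:ℝ) 1) (ωM y))
    :
    ∀ y ∈ Set.Icc (0:ℝ) 1, ∀ ε > 0, ∀ᶠ t in Filter.atTop,
      l t y ≤ ωM y * ρstar / k₂ / k₁ + ε :=
  effector_cells_limsup_bound_general n l p r d μ ψ ν ω k₁ k₂ ρ φ χ ρstar ωM hk₁ hk₂ hdc hrpos hdpos
    hμpos hψpos hνpos hωpos hρdef hφdef hχdef hnode hlode hpode hnnn hlnn hpnn hncont hρstar hωM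
end

section
/- Non-autonomous logistic ODE lemma: let k₂ > 0, let a : [0,∞) → ℝ be continuous with a(t) → ā as t → ∞ for some ā ≥ 0, and let u : [0,∞) → (0,∞) solve u'(t) = [a(t) − k₂ u(t)] u(t) with u(0) > 0. Then u(t) → ā/k₂ as t → ∞. -/
/-!
Along a positive solution, `v = log u` satisfies `v' = a(t) - k₂ u`. For a level `B > ā/k₂`,
once `a(t)` is close to `ā` the derivative of `v` is at most some `-c < 0` whenever `u ≥ B`.
So either `u` drops to `B` at some time, after which the level `B` is never crossed upwards again,
or `log u` decreases at least linearly forever, which is absurd while `u ≥ B`. The same argument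
with reversed inequalities bounds `u` from below by any level below `ā/k₂`.
-/

open Filter Real Topology

section Barrier

variable {v f : ℝ → ℝ} {T B c : ℝ}

lemma le_of_hasDerivAt_neg_at_level (hd : ∀ t ≥ T, HasDerivAt v (f t) t)
    (hf : ∀ t ≥ T, v t = B → f t < 0) (hT : v T ≤ B) : ∀ t ≥ T, v t ≤ B := fun _ ht =>
  image_le_of_deriv_right_lt_deriv_boundary (B := fun _ => B) (B' := fun _ => 0)
    (fun x hx => (hd x hx.1).continuousAt.continuousWithinAt)
    (fun x hx => (hd x hx.1).hasDerivWithinAt) hT (fun x => hasDerivAt_const x B)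
    (fun x hx => hf x hx.1) ⟨ht, le_rfl⟩

lemma le_sub_mul_of_hasDerivAt_le_neg (hd : ∀ t ≥ T, HasDerivAt v (f t) t)
    (hf : ∀ t ≥ T, f t ≤ -c) : ∀ t ≥ T, v t ≤ v T - c * (t - T) := by
  have hline : ∀ x, HasDerivAt (fun t => v T - c * (t - T)) (-c) x := fun x => by
    simpa using ((hasDerivAt_id x).sub_const T).const_mul c |>.const_sub (v T)
  exact fun t ht =>
    image_le_of_deriv_right_le_deriv_boundary (B := fun t => v T - c * (t - T))
      (B' := fun _ => -c)
      (fun x hx => (hd x hx.1).continuousAt.continuousWithinAt)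
      (fun x hx => (hd x hx.1).hasDerivWithinAt) (by simp)
      (fun x _ => (hline x).continuousAt.continuousWithinAt)
      (fun x _ => (hline x).hasDerivWithinAt) (fun x hx => hf x hx.1) ⟨ht, le_rfl⟩

lemma eventually_le_of_hasDerivAt_le_neg (hc : 0 < c) (hd : ∀ t ≥ T, HasDerivAt v (f t) t)
    (hf : ∀ t ≥ T, B ≤ v t → f t ≤ -c) : ∀ᶠ t in atTop, v t ≤ B := by
  by_cases hdrop : ∃ t₀ ≥ T, v t₀ ≤ B
  · obtain ⟨t₀, ht₀, hv₀⟩ := hdrop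
    have hbarrier := le_of_hasDerivAt_neg_at_level (fun t ht => hd t (ht₀.trans ht))
      (fun t ht hvt => (hf t (ht₀.trans ht) hvt.ge).trans_lt (neg_neg_of_pos hc)) hv₀
    exact eventually_atTop.2 ⟨t₀, hbarrier⟩
  · push Not at hdrop
    have hdecay := le_sub_mul_of_hasDerivAt_le_neg hd fun t ht => hf t ht (hdrop t ht).le
    have hvT := hdrop T le_rfl
    have ht₁ : T ≤ T + (v T - B) / c := le_add_of_nonneg_right (div_nonneg (by linarith) hc.le)
    have hcross : v (T + (v T - B) / c) ≤ B := by
      calc _ ≤ v T - c * (T + (v T - B) / c - T) := hdecay _ ht₁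
        _ = B := by field_simp; ring
    exact absurd hcross (hdrop _ ht₁).not_ge

lemma eventually_ge_of_hasDerivAt_ge_pos (hc : 0 < c) (hd : ∀ t ≥ T, HasDerivAt v (f t) t)
    (hf : ∀ t ≥ T, v t ≤ B → c ≤ f t) : ∀ᶠ t in atTop, B ≤ v t := by
  have hneg := eventually_le_of_hasDerivAt_le_neg (v := -v) (f := -f) (B := -B) hc
    (fun t ht => (hd t ht).neg) (fun t ht hvt => neg_le_neg (hf t ht (neg_le_neg_iff.1 hvt)))
  filter_upwards [hneg] with t ht using neg_le_neg_iff.1 ht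

end Barrier

lemma hasDerivAt_log_of_hasDerivAt_mul_self {u : ℝ → ℝ} {g t : ℝ}
    (hu : HasDerivAt u (g * u t) t) (hpos : 0 < u t) :
    HasDerivAt (fun s => log (u s)) g t := by
  simpa [hpos.ne'] using hu.log hpos.ne'

section Logistic

variable {k abar B : ℝ} {a u : ℝ → ℝ}

lemma logistic_eventually_le (hk : 0 < k) (ha : Tendsto a atTop (𝓝 abar))
    (hupos : ∀ t ≥ 0, 0 < u t) (hode : ∀ t ≥ 0, HasDerivAt u ((a t - k * u t) * u t) t)
    (hB0 : 0 < B) (hB : abar / k < B) : ∀ᶠ t in atTop, u t ≤ B := by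
  set c := (k * B - abar) / 2 with hc_def
  have hc : 0 < c := by rw [div_lt_iff₀ hk] at hB; linarith [hc_def]
  obtain ⟨T, haT⟩ := eventually_atTop.1 (ha.eventually_le_const (lt_add_of_pos_right abar hc))
  have hlog := eventually_le_of_hasDerivAt_le_neg (T := max T 0) (B := log B) hc
    (fun t ht => hasDerivAt_log_of_hasDerivAt_mul_self (hode t (le_of_max_le_right ht))
      (hupos t (le_of_max_le_right ht)))
    fun t ht hlogt => by
      have hBu : B ≤ u t := (log_le_log_iff hB0 (hupos t (le_of_max_le_right ht))).1 hlogt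
      have := haT t (le_of_max_le_left ht)
      linarith [mul_le_mul_of_nonneg_left hBu hk.le, hc_def]
  filter_upwards [hlog, eventually_ge_atTop 0] with t hlogt ht
  exact (log_le_log_iff (hupos t ht) hB0).1 hlogt

lemma logistic_eventually_ge (hk : 0 < k) (ha : Tendsto a atTop (𝓝 abar))
    (hupos : ∀ t ≥ 0, 0 < u t) (hode : ∀ t ≥ 0, HasDerivAt u ((a t - k * u t) * u t) t)
    (hB : B < abar / k) : ∀ᶠ t in atTop, B ≤ u t := by
  rcases le_or_gt B 0 with hB0 | hB0
  · filter_upwards [eventually_ge_atTop 0] with t ht using hB0.trans (hupos t ht).le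
  set c := (abar - k * B) / 2 with hc_def
  have hc : 0 < c := by rw [lt_div_iff₀ hk] at hB; linarith [hc_def]
  obtain ⟨T, haT⟩ := eventually_atTop.1 (ha.eventually_const_le (sub_lt_self abar hc))
  have hlog := eventually_ge_of_hasDerivAt_ge_pos (T := max T 0) (B := log B) hc
    (fun t ht => hasDerivAt_log_of_hasDerivAt_mul_self (hode t (le_of_max_le_right ht))
      (hupos t (le_of_max_le_right ht)))
    fun t ht hlogt => by
      have huB : u t ≤ B := (log_le_log_iff (hupos t (le_of_max_le_right ht)) hB0).1 hlogt
      have := haT t (le_of_max_le_left ht)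
      linarith [mul_le_mul_of_nonneg_left huB hk.le, hc_def]
  filter_upwards [hlog, eventually_ge_atTop 0] with t hlogt ht
  exact (log_le_log_iff hB0 (hupos t ht)).1 hlogt

end Logistic

theorem nonautonomous_logistic_limit_general
    (k₂ : ℝ) (hk₂ : 0 < k₂) (a u : ℝ → ℝ) (abar : ℝ)
    (halim : Filter.Tendsto a Filter.atTop (nhds abar))
    (habar : 0 ≤ abar)
    (hupos : ∀ t ≥ (0:ℝ), 0 < u t)
    (hode : ∀ t ≥ (0:ℝ), HasDerivAt u ((a t - k₂ * u t) * u t) t) :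
    Filter.Tendsto u Filter.atTop (nhds (abar / k₂)) := by
  refine (nhds_basis_Icc_pos (abar / k₂)).tendsto_right_iff.2 fun ε hε => ?_
  have hL : 0 ≤ abar / k₂ := div_nonneg habar hk₂.le
  filter_upwards [logistic_eventually_ge hk₂ halim hupos hode (sub_lt_self _ hε),
    logistic_eventually_le hk₂ halim hupos hode (by linarith) (lt_add_of_pos_right _ hε)]
    with t hlower hupper using ⟨hlower, hupper⟩

/-- Non-autonomous logistic ODE lemma: if a(t) → ā ≥ 0 then the positive solution of
u' = (a(t) − k₂ u) u converges to ā/k₂. -/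
theorem nonautonomous_logistic_limit
    (k₂ : ℝ) (hk₂ : 0 < k₂) (a u : ℝ → ℝ) (abar : ℝ)
    (hac : ContinuousOn a (Set.Ici 0))
    (halim : Filter.Tendsto a Filter.atTop (nhds abar))
    (habar : 0 ≤ abar)
    (hupos : ∀ t ≥ (0:ℝ), 0 < u t)
    (hode : ∀ t ≥ (0:ℝ), HasDerivAt u ((a t - k₂ * u t) * u t) t) :
    Filter.Tendsto u Filter.atTop (nhds (abar / k₂)) :=
  nonautonomous_logistic_limit_general k₂ hk₂ a u abar halim habar hupos hode
end

section
/- Extinction claim (step ii of the main theorem): let n : [0,∞)×[0,1] → [0,∞) be continuous, continuously differentiable in t, satisfy ∂n/∂t(t,x) = [r(x) − d(x)ρ(t) − μ(x)φ(t)] n(t,x) with ρ(t) = ∫₀¹ n(t,x) dx, where r, d, μ are continuous and positive on [0,1] and φ : [0,∞) → [0,∞) is continuous, and suppose ρ(t) → ρ^∞ and φ(t) → φ^∞ as t → ∞. If r(x) − d(x)ρ^∞ − μ(x)φ^∞ < 0 for every x ∈ [0,1], then ρ(t) → 0 as t → ∞ (hence ρ^∞ = 0). -/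
/-!
On the compact trait interval the fitness `r - d ρ(t) - μ φ(t)` converges uniformly to the
limiting fitness, which is continuous and negative, hence at most some `-2ε < 0`. So from some
time `T` on every `n(·, x)` satisfies `∂ₜn ≤ -ε n` and decays like `e^{-ε (t - T)}` by Grönwall,
uniformly in `x`; integrating in `x`, so does `ρ`.
-/

open Filter Real Set Topology MeasureTheory

variable {ι X : Type*} {l : Filter ι} {K : Set X}

/-- The fitness of trait `x` when the tumour mass is `ρ(t) = p` and the immune density `φ(t) = q`. -/
def fitness (r d μ : X → ℝ) (p q : ℝ) (x : X) : ℝ := r x - d x * p - μ x * q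

theorem tendstoUniformlyOn_mul_of_bounded {b : X → ℝ} {C : ℝ} (hb : ∀ x ∈ K, |b x| ≤ C)
    {ρ : ι → ℝ} {ρinf : ℝ} (hρ : Tendsto ρ l (𝓝 ρinf)) :
    TendstoUniformlyOn (fun t x => b x * ρ t) (fun x => b x * ρinf) l K := by
  rw [Metric.tendstoUniformlyOn_iff]
  intro ε hε
  filter_upwards [Metric.tendsto_nhds.1 hρ (ε / (|C| + 1)) (by positivity)] with t ht x hx
  rw [dist_comm] at ht
  calc dist (b x * ρinf) (b x * ρ t) = |b x| * dist ρinf (ρ t) := by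
        rw [Real.dist_eq, Real.dist_eq, ← mul_sub, abs_mul]
    _ ≤ (|C| + 1) * dist ρinf (ρ t) := by
        gcongr; linarith [hb x hx, le_abs_self C]
    _ < (|C| + 1) * (ε / (|C| + 1)) := by gcongr
    _ = ε := by field_simp

theorem tendstoUniformlyOn_fitness [TopologicalSpace X] (hK : IsCompact K) {r d μ : X → ℝ}
    (hd : ContinuousOn d K) (hμ : ContinuousOn μ K) {ρ φ : ι → ℝ} {ρinf φinf : ℝ}
    (hρ : Tendsto ρ l (𝓝 ρinf)) (hφ : Tendsto φ l (𝓝 φinf)) :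
    TendstoUniformlyOn (fun t => fitness r d μ (ρ t) (φ t)) (fitness r d μ ρinf φinf) l K := by
  obtain ⟨Cd, hCd⟩ := hK.exists_bound_of_continuousOn hd
  obtain ⟨Cμ, hCμ⟩ := hK.exists_bound_of_continuousOn hμ
  have hr : TendstoUniformlyOn (fun _ => r) r l K := fun _ hu =>
    .of_forall fun _ _ _ => refl_mem_uniformity hu
  exact (hr.fun_sub (tendstoUniformlyOn_mul_of_bounded hCd hρ)).fun_sub
    (tendstoUniformlyOn_mul_of_bounded hCμ hφ)

theorem TendstoUniformlyOn.exists_pos_eventually_forall_le_neg [TopologicalSpace X]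
    {F : ι → X → ℝ} {G : X → ℝ} (hF : TendstoUniformlyOn F G l K) (hK : IsCompact K)
    (hG : ContinuousOn G K) (hneg : ∀ x ∈ K, G x < 0) :
    ∃ ε > 0, ∀ᶠ t in l, ∀ x ∈ K, F t x ≤ -ε := by
  obtain ⟨ε, hε, hGε⟩ := hK.exists_forall_le' hG.neg fun x hx => neg_pos.2 (hneg x hx)
  refine ⟨ε / 2, half_pos hε, ?_⟩
  filter_upwards [Metric.tendstoUniformlyOn_iff.1 hF (ε / 2) (half_pos hε)] with t ht x hx
  have hclose := abs_lt.1 (Real.dist_eq _ _ ▸ ht x hx)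
  have hGx : ε ≤ -G x := hGε x hx
  linarith [hclose.2]

theorem le_mul_exp_of_hasDerivAt_mul_of_le {f a : ℝ → ℝ} {K T t : ℝ} (hTt : T ≤ t)
    (hf : ∀ s ∈ Icc T t, HasDerivAt f (a s * f s) s) (hf0 : ∀ s ∈ Icc T t, 0 ≤ f s)
    (ha : ∀ s ∈ Icc T t, a s ≤ K) : f t ≤ f T * exp (K * (t - T)) := by
  have hbound := le_gronwallBound_of_liminf_deriv_right_le (f' := fun s => a s * f s) (ε := 0)
    (fun s hs => (hf s hs).continuousAt.continuousWithinAt)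
    (fun s hs _ hr => (hf s (Ico_subset_Icc_self hs)).hasDerivWithinAt.liminf_right_slope_le hr)
    le_rfl
    (fun s hs => by
      simpa using mul_le_mul_of_nonneg_right (ha s (Ico_subset_Icc_self hs))
        (hf0 s (Ico_subset_Icc_self hs)))
    t ⟨hTt, le_rfl⟩
  rwa [gronwallBound_ε0] at hbound

theorem tendsto_zero_of_nonneg_of_le_mul_exp {u : ℝ → ℝ} {C K T : ℝ} (hK : K < 0)
    (hu0 : ∀ᶠ t in atTop, 0 ≤ u t) (hu : ∀ t ≥ T, u t ≤ C * exp (K * (t - T))) :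
    Tendsto u atTop (𝓝 0) := by
  have hexp : Tendsto (fun t => C * exp (K * (t - T))) atTop (𝓝 0) := by
    simpa [sub_eq_add_neg] using ((tendsto_exp_atBot.comp ((tendsto_atTop_add_const_right _ (-T)
      tendsto_id).const_mul_atTop_of_neg hK)).const_mul C)
  exact tendsto_of_tendsto_of_tendsto_of_le_of_le' tendsto_const_nhds hexp hu0
    (eventually_ge_atTop T |>.mono hu)

theorem negative_fitness_extinction_general
    (n : ℝ → ℝ → ℝ) (r d μ : ℝ → ℝ) (ρ φ : ℝ → ℝ)
    (hrc : ContinuousOn r (Set.Icc 0 1)) (hdc : ContinuousOn d (Set.Icc 0 1))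
    (hμc : ContinuousOn μ (Set.Icc 0 1))
    (hnnn : ∀ t ≥ (0:ℝ), ∀ x ∈ Set.Icc (0:ℝ) 1, 0 ≤ n t x)
    (hncont : ∀ t ≥ (0:ℝ), ContinuousOn (n t) (Set.Icc 0 1))
    (hnode : ∀ x ∈ Set.Icc (0:ℝ) 1, ∀ t > (0:ℝ),
      HasDerivAt (fun s => n s x) ((r x - d x * ρ t - μ x * φ t) * n t x) t)
    (hρdef : ∀ t, ρ t = ∫ x in (0:ℝ)..1, n t x)
    (ρinf φinf : ℝ)
    (hρlim : Filter.Tendsto ρ Filter.atTop (nhds ρinf))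
    (hφlim : Filter.Tendsto φ Filter.atTop (nhds φinf))
    (hneg : ∀ x ∈ Set.Icc (0:ℝ) 1, r x - d x * ρinf - μ x * φinf < 0) :
    Filter.Tendsto ρ Filter.atTop (nhds 0) := by
  have hfitc : ContinuousOn (fitness r d μ ρinf φinf) (Icc 0 1) := by
    unfold fitness; fun_prop
  obtain ⟨ε, hε, hfit⟩ := (tendstoUniformlyOn_fitness isCompact_Icc hdc hμc hρlim hφlim)
    |>.exists_pos_eventually_forall_le_neg isCompact_Icc hfitc hneg
  obtain ⟨T, hT⟩ := (hfit.and (eventually_gt_atTop 0)).exists_forall_of_atTop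
  have hint : ∀ t ≥ T, IntervalIntegrable (n t) volume 0 1 := fun t ht =>
    (hncont t (hT t ht).2.le).intervalIntegrable_of_Icc zero_le_one
  have hdecay : ∀ t ≥ T, ρ t ≤ ρ T * exp (-ε * (t - T)) := by
    intro t ht
    rw [hρdef, hρdef, ← intervalIntegral.integral_mul_const]
    refine intervalIntegral.integral_mono_on zero_le_one (hint t ht)
      ((hint T le_rfl).mul_const _) fun x hx => ?_
    exact le_mul_exp_of_hasDerivAt_mul_of_le ht (fun s hs => hnode x hx s (hT s hs.1).2)
      (fun s hs => hnnn s (hT s hs.1).2.le x hx) (fun s hs => (hT s hs.1).1 x hx)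
  refine tendsto_zero_of_nonneg_of_le_mul_exp (neg_lt_zero.2 hε) ?_ hdecay
  filter_upwards [eventually_ge_atTop 0] with t ht
  rw [hρdef]
  exact intervalIntegral.integral_nonneg zero_le_one (hnnn t ht)

/-- Step ii of the main theorem: if the asymptotic fitness is everywhere negative,
the tumour mass goes extinct. -/
theorem negative_fitness_extinction
    (n : ℝ → ℝ → ℝ) (r d μ : ℝ → ℝ) (ρ φ : ℝ → ℝ)
    (hrc : ContinuousOn r (Set.Icc 0 1)) (hdc : ContinuousOn d (Set.Icc 0 1))
    (hμc : ContinuousOn μ (Set.Icc 0 1))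
    (hrpos : ∀ x ∈ Set.Icc (0:ℝ) 1, 0 < r x)
    (hdpos : ∀ x ∈ Set.Icc (0:ℝ) 1, 0 < d x)
    (hμpos : ∀ x ∈ Set.Icc (0:ℝ) 1, 0 < μ x)
    (hφc : Continuous φ) (hφnn : ∀ t, 0 ≤ φ t)
    (hnnn : ∀ t ≥ (0:ℝ), ∀ x ∈ Set.Icc (0:ℝ) 1, 0 ≤ n t x)
    (hncont : ∀ t ≥ (0:ℝ), ContinuousOn (n t) (Set.Icc 0 1))
    (hnode : ∀ x ∈ Set.Icc (0:ℝ) 1, ∀ t > (0:ℝ),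
      HasDerivAt (fun s => n s x) ((r x - d x * ρ t - μ x * φ t) * n t x) t)
    (hρdef : ∀ t, ρ t = ∫ x in (0:ℝ)..1, n t x)
    (ρinf φinf : ℝ)
    (hρlim : Filter.Tendsto ρ Filter.atTop (nhds ρinf))
    (hφlim : Filter.Tendsto φ Filter.atTop (nhds φinf))
    (hneg : ∀ x ∈ Set.Icc (0:ℝ) 1, r x - d x * ρinf - μ x * φinf < 0) :
    Filter.Tendsto ρ Filter.atTop (nhds 0) :=
  negative_fitness_extinction_general n r d μ ρ φ hrc hdc hμc hnnn hncont hnode hρdef ρinf φinf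
    hρlim hφlim hneg
end
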